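/- arXiv:2508.15451 — 9 statements merged into one kernel-verified Lean document; each statement's English description precedes it below -/
import Mathlib

section
/- Let k01, k10 : ℝ → ℝ be continuous functions with k01(v) ≥ 0 and k10(v) ≥ 0 for all v, let V : ℝ → ℝ be piecewise continuous, and let P : [t₀, ∞) → ℝ be a solution of the ODE Ṗ_t = (1 − P_t)·k01(V_t) − P_t·k10(V_t). If P_{t₀} ≥ 0, then P_t ≥ 0 for all t ≥ t₀. -/
/-- A function `V : ℝ → ℝ` is piecewise continuous: it is measurable, bounded on
compact intervals, and on every compact interval it is continuous except possibly
at finitely many points. -/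
def PiecewiseContinuous (V : ℝ → ℝ) : Prop :=
  Measurable V ∧
  (∀ a b : ℝ, Bornology.IsBounded (V '' Set.Icc a b)) ∧
  (∀ a b : ℝ, a < b → ∃ s : Finset ℝ,
      ∀ x ∈ Set.Ioo a b \ (s : Set ℝ), ContinuousAt V x)

/-- Lemma 1, second part: for the DMS ODE
`Ṗ_t = (1 − P_t)·k01(V_t) − P_t·k10(V_t)` with nonnegative continuous rates,
nonnegativity of the state is preserved forward in time. -/
theorem dms_nonneg_invariant
    (k01 k10 : ℝ → ℝ) (hk01c : Continuous k01) (hk10c : Continuous k10)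
    (hk01 : ∀ v, 0 ≤ k01 v) (hk10 : ∀ v, 0 ≤ k10 v)
    (V : ℝ → ℝ) (hV : PiecewiseContinuous V)
    (t₀ : ℝ) (P : ℝ → ℝ)
    (hP : ∀ t ∈ Set.Ici t₀, HasDerivAt P ((1 - P t) * k01 (V t) - P t * k10 (V t)) t)
    (h0 : 0 ≤ P t₀) :
    ∀ t ∈ Set.Ici t₀, 0 ≤ P t := by
  intro t₁ ht₁
  have ht01 : t₀ ≤ t₁ := ht₁
  set g : ℝ → ℝ := fun x => -P x with hgdef
  set f : ℝ → ℝ := fun x => max (g x) 0 with hfdef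
  have hcontP : ContinuousOn P (Set.Icc t₀ t₁) := fun x hx =>
    ((hP x hx.1).continuousAt).continuousWithinAt
  have hcontf : ContinuousOn f (Set.Icc t₀ t₁) := fun x hx => ((hcontP x hx).neg).max continuousWithinAt_const
  have key : ∀ x ∈ Set.Icc t₀ t₁, f x ≤ gronwallBound 0 0 0 (x - t₀) := by
    apply le_gronwallBound_of_liminf_deriv_right_le (f' := fun _ => (0 : ℝ)) hcontf
    · intro x hx r hr
      have hr0 : (0 : ℝ) < r := hr
      have hd := hP x hx.1
      by_cases hgx : 0 ≤ g x
      · -- here P x ≤ 0, so the derivative of g is ≤ 0 < r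
        have hPx : P x ≤ 0 := by
          have : 0 ≤ -P x := hgx
          linarith
        have hdg : HasDerivAt g (-((1 - P x) * k01 (V x) - P x * k10 (V x))) x := hd.neg
        have hdle : -((1 - P x) * k01 (V x) - P x * k10 (V x)) < r := by
          nlinarith [hk01 (V x), hk10 (V x)]
        have hslope : Filter.Tendsto (slope g x) (nhdsWithin x {x}ᶜ)
            (nhds (-((1 - P x) * k01 (V x) - P x * k10 (V x)))) :=
          hasDerivAt_iff_tendsto_slope.mp hdg
        have hev : ∀ᶠ z in nhdsWithin x {x}ᶜ, slope g x z < r :=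
          hslope.eventually (Filter.Tendsto.eventually_lt_const hdle Filter.tendsto_id)
        have hev' : ∀ᶠ z in nhdsWithin x (Set.Ioi x), slope g x z < r :=
          hev.filter_mono (nhdsWithin_mono x (fun z hz => ne_of_gt hz))
        have hev2 : ∀ᶠ z in nhdsWithin x (Set.Ioi x),
            (z - x)⁻¹ * (f z - f x) < r := by
          filter_upwards [hev', self_mem_nhdsWithin] with z hz hzx
          have hzx' : (0 : ℝ) < z - x := sub_pos.mpr hzx
          have hfx : f x = g x := max_eq_left hgx
          have hslz : (z - x)⁻¹ * (g z - g x) < r := by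
            have : slope g x z = (z - x)⁻¹ * (g z - g x) := by
              rw [slope_def_field]; ring
            linarith [this ▸ hz]
          rcases le_total (g z) 0 with hgz | hgz
          · have hfz : f z = 0 := max_eq_right hgz
            rw [hfz, hfx]
            have : (z - x)⁻¹ * (0 - g x) ≤ 0 := by
              apply mul_nonpos_of_nonneg_of_nonpos (le_of_lt (inv_pos.mpr hzx'))
              linarith
            linarith
          · have hfz : f z = g z := max_eq_left hgz
            rw [hfz, hfx]; exact hslz
        exact hev2.frequently
      · -- here g x < 0, so f is locally 0
        push_neg at hgx
        have hcg : ContinuousAt g x := (hd.neg).continuousAt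
        have hev : ∀ᶠ z in nhds x, g z < 0 := hcg.eventually_lt continuousAt_const hgx
        have hev' : ∀ᶠ z in nhdsWithin x (Set.Ioi x),
            (z - x)⁻¹ * (f z - f x) < r := by
          have hx0 : f x = 0 := max_eq_right (le_of_lt hgx)
          filter_upwards [hev.filter_mono nhdsWithin_le_nhds] with z hz
          have hz0 : f z = 0 := max_eq_right (le_of_lt hz)
          rw [hz0, hx0]
          simpa using hr0
        exact hev'.frequently
    · show f t₀ ≤ 0
      exact max_le (by show -P t₀ ≤ 0; linarith) le_rfl
    · intro x hx
      show (0 : ℝ) ≤ 0 * f x + 0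
      simp
  have hfin := key t₁ ⟨ht01, le_rfl⟩
  rw [gronwallBound_ε0_δ0] at hfin
  have : g t₁ ≤ f t₁ := le_max_left _ _
  have : -P t₁ ≤ 0 := le_trans this hfin
  linarith
end

section
/- Let k01, k10 : ℝ → ℝ be continuous nonnegative functions with K = k01 + k10 strictly positive on a compact interval [a,b], let ν = min_{v ∈ [a,b]} K(v), and let V : ℝ → ℝ be piecewise continuous with V_t ∈ [a,b] for all t. If P¹ and P² are two solutions of Ṗ_t = k01(V_t) − K(V_t)·P_t on [t₀, ∞) driven by the same input V but with different initial values, then |P¹_t − P²_t| = Φ_{t,t₀}·|P¹_{t₀} − P²_{t₀}| ≤ e^{−ν(t−t₀)}·|P¹_{t₀} − P²_{t₀}| for all t ≥ t₀; hence for every fixed t, |P¹_t − P²_t| → 0 as t₀ → −∞. -/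
/-!
The difference `D = P¹ − P²` of two solutions solves the homogeneous equation `Ḋ = −K(V) D`, so
`D · exp (∫_{t₀}^t K(V))` has derivative zero wherever `V` is continuous, i.e. off a finite set.
Being continuous, it is constant, which is the identity `D_t = Φ_{t,t₀} D_{t₀}`. Since `K(V) ≥ ν`
pointwise, `Φ_{t,t₀} ≤ e^{−ν(t−t₀)}`, and `ν > 0` makes this bound vanish as `t₀ → −∞`.
-/

open Real Set Filter Topology MeasureTheory

theorem PiecewiseContinuous.exists_countable_continuousAt {V : ℝ → ℝ}
    (hV : PiecewiseContinuous V) (c d : ℝ) :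
    ∃ S : Set ℝ, S.Countable ∧ ∀ x ∈ Ioo c d \ S, ContinuousAt V x := by
  rcases lt_or_ge c d with hcd | hdc
  · obtain ⟨S, hS⟩ := hV.2.2 c d hcd
    exact ⟨S, S.countable_toSet, hS⟩
  · exact ⟨∅, countable_empty, by simp [Ioo_eq_empty_of_le hdc]⟩

theorem Continuous.intervalIntegrable_comp_of_mapsTo_isCompact {K V : ℝ → ℝ} {s : Set ℝ}
    (hK : Continuous K) (hs : IsCompact s) (hV : Measurable V) (hVs : ∀ t, V t ∈ s) (c d : ℝ) :
    IntervalIntegrable (fun t => K (V t)) volume c d := by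
  obtain ⟨M, hM⟩ := hs.exists_bound_of_continuousOn hK.continuousOn
  rw [intervalIntegrable_iff]
  exact Measure.integrableOn_of_bounded measure_Ioc_lt_top.ne
    (hK.measurable.comp hV).aestronglyMeasurable (ae_of_all _ fun t => hM (V t) (hVs t))

section LinearODE

variable {k D : ℝ → ℝ} {t₀ t : ℝ}

theorem hasDerivAt_mul_exp_integral_eq_zero {x : ℝ} (hk_int : IntervalIntegrable k volume t₀ x)
    (hk_meas : Measurable k) (hk_cont : ContinuousAt k x) (hD : HasDerivAt D (-k x * D x) x) :
    HasDerivAt (fun u => D u * exp (∫ s in t₀..u, k s)) 0 x := by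
  have hF := intervalIntegral.integral_hasDerivAt_right hk_int
    hk_meas.stronglyMeasurable.stronglyMeasurableAtFilter hk_cont
  exact (hD.mul hF.exp).congr_deriv (by ring)

theorem eq_exp_neg_integral_mul_of_hasDerivAt (ht : t₀ ≤ t)
    (hk_int : IntervalIntegrable k volume t₀ t) (hk_meas : Measurable k) {S : Set ℝ}
    (hS : S.Countable) (hk_cont : ∀ x ∈ Ioo t₀ t \ S, ContinuousAt k x)
    (hD : ∀ x ∈ Icc t₀ t, HasDerivAt D (-k x * D x) x) :
    D t = exp (-∫ s in t₀..t, k s) * D t₀ := by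
  set G := fun u => D u * exp (∫ s in t₀..u, k s)
  have hG_cont : ContinuousOn G (Icc t₀ t) := by
    have hF := intervalIntegral.continuousOn_primitive_interval' hk_int left_mem_uIcc
    rw [uIcc_of_le ht] at hF
    exact (HasDerivAt.continuousOn hD).mul hF.rexp
  have hG_deriv : ∀ x ∈ Ioo t₀ t \ S, HasDerivAt G 0 x := fun x hx =>
    hasDerivAt_mul_exp_integral_eq_zero (hk_int.mono_set (by
      rw [uIcc_of_le ht, uIcc_of_le hx.1.1.le]; exact Icc_subset_Icc_right hx.1.2.le))
      hk_meas (hk_cont x hx) (hD x (Ioo_subset_Icc_self hx.1))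
  have hG_const : G t = G t₀ := by
    have := integral_eq_of_hasDerivAt_off_countable_of_le G 0 ht hS hG_cont hG_deriv
      intervalIntegrable_const
    simp only [Pi.zero_apply, intervalIntegral.integral_zero] at this
    linarith
  simp only [G, intervalIntegral.integral_same, exp_zero, mul_one] at hG_const
  rw [exp_neg, ← hG_const, mul_comm, mul_inv_cancel_right₀ (exp_pos _).ne']

theorem sub_eq_exp_neg_integral_mul_sub_of_hasDerivAt {f P₁ P₂ : ℝ → ℝ} (ht : t₀ ≤ t)
    (hk_int : IntervalIntegrable k volume t₀ t) (hk_meas : Measurable k) {S : Set ℝ}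
    (hS : S.Countable) (hk_cont : ∀ x ∈ Ioo t₀ t \ S, ContinuousAt k x)
    (h₁ : ∀ x ∈ Icc t₀ t, HasDerivAt P₁ (f x - k x * P₁ x) x)
    (h₂ : ∀ x ∈ Icc t₀ t, HasDerivAt P₂ (f x - k x * P₂ x) x) :
    P₁ t - P₂ t = exp (-∫ s in t₀..t, k s) * (P₁ t₀ - P₂ t₀) :=
  eq_exp_neg_integral_mul_of_hasDerivAt (D := fun u => P₁ u - P₂ u) ht hk_int hk_meas hS hk_cont
    fun x hx => ((h₁ x hx).sub (h₂ x hx)).congr_deriv (by ring)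

theorem exp_neg_integral_le_exp_neg_mul {ν : ℝ} (ht : t₀ ≤ t)
    (hk_int : IntervalIntegrable k volume t₀ t) (hν : ∀ x ∈ Icc t₀ t, ν ≤ k x) :
    exp (-∫ s in t₀..t, k s) ≤ exp (-ν * (t - t₀)) := by
  have := intervalIntegral.integral_mono_on ht intervalIntegrable_const hk_int hν
  rw [intervalIntegral.integral_const, smul_eq_mul] at this
  exact exp_le_exp.2 (by linarith)

end LinearODE

theorem tendsto_exp_neg_mul_sub_mul_atBot {ν : ℝ} (hν : 0 < ν) (t C : ℝ) :
    Tendsto (fun s => exp (-ν * (t - s)) * C) atBot (𝓝 0) := by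
  have hlin : Tendsto (fun s => ν * s + -(ν * t)) atBot atBot :=
    tendsto_atBot_add_const_right _ _ (tendsto_id.const_mul_atBot hν)
  have := (tendsto_exp_comp_nhds_zero.2 hlin).mul_const C
  simp only [zero_mul] at this
  convert this using 4
  ring

theorem dms_exponential_contraction_general
    (k01 k10 K : ℝ → ℝ)
    (hk01c : Continuous k01) (hk10c : Continuous k10)
    (hK : ∀ v, K v = k01 v + k10 v)
    (a b ν : ℝ)
    (hKpos : ∀ v ∈ Set.Icc a b, 0 < K v)
    (hν : IsLeast (K '' Set.Icc a b) ν)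
    (V : ℝ → ℝ) (hV : PiecewiseContinuous V) (hVab : ∀ t, V t ∈ Set.Icc a b)
    (Φ : ℝ → ℝ → ℝ) (hΦ : ∀ t τ, Φ t τ = Real.exp (-∫ s in τ..t, K (V s))) :
    (∀ (t₀ : ℝ) (P₁ P₂ : ℝ → ℝ),
      (∀ t ∈ Set.Ici t₀, HasDerivAt P₁ (k01 (V t) - K (V t) * P₁ t) t) →
      (∀ t ∈ Set.Ici t₀, HasDerivAt P₂ (k01 (V t) - K (V t) * P₂ t) t) →
      ∀ t ∈ Set.Ici t₀,
        |P₁ t - P₂ t| = Φ t t₀ * |P₁ t₀ - P₂ t₀| ∧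
        |P₁ t - P₂ t| ≤ Real.exp (-ν * (t - t₀)) * |P₁ t₀ - P₂ t₀|) ∧
    (∀ Q₁ Q₂ : ℝ → ℝ → ℝ,
      (∀ s : ℝ, ∀ t ∈ Set.Ici s, HasDerivAt (Q₁ s) (k01 (V t) - K (V t) * Q₁ s t) t) →
      (∀ s : ℝ, ∀ t ∈ Set.Ici s, HasDerivAt (Q₂ s) (k01 (V t) - K (V t) * Q₂ s t) t) →
      (∃ C : ℝ, ∀ s : ℝ, |Q₁ s s - Q₂ s s| ≤ C) →
      ∀ t : ℝ, Filter.Tendsto (fun s => Q₁ s t - Q₂ s t) Filter.atBot (nhds 0)) := by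
  have hKc : Continuous K := funext hK ▸ hk01c.add hk10c
  have hνpos : 0 < ν := by
    obtain ⟨v, hv, rfl⟩ := hν.1
    exact hKpos v hv
  have hKV_int := hKc.intervalIntegrable_comp_of_mapsTo_isCompact isCompact_Icc hV.1 hVab
  have contraction : ∀ (t₀ : ℝ) (P₁ P₂ : ℝ → ℝ),
      (∀ t ∈ Ici t₀, HasDerivAt P₁ (k01 (V t) - K (V t) * P₁ t) t) →
      (∀ t ∈ Ici t₀, HasDerivAt P₂ (k01 (V t) - K (V t) * P₂ t) t) →
      ∀ t ∈ Ici t₀, |P₁ t - P₂ t| = Φ t t₀ * |P₁ t₀ - P₂ t₀| ∧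
        |P₁ t - P₂ t| ≤ exp (-ν * (t - t₀)) * |P₁ t₀ - P₂ t₀| := by
    intro t₀ P₁ P₂ h₁ h₂ t ht
    obtain ⟨S, hS, hVS⟩ := hV.exists_countable_continuousAt t₀ t
    have hdiff : P₁ t - P₂ t = Φ t t₀ * (P₁ t₀ - P₂ t₀) := hΦ t t₀ ▸
      sub_eq_exp_neg_integral_mul_sub_of_hasDerivAt ht (hKV_int _ _) (hKc.measurable.comp hV.1)
        hS (fun x hx => hKc.continuousAt.comp (hVS x hx)) (fun x hx => h₁ x hx.1)
        fun x hx => h₂ x hx.1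
    have hΦ_le : Φ t t₀ ≤ exp (-ν * (t - t₀)) := hΦ t t₀ ▸
      exp_neg_integral_le_exp_neg_mul ht (hKV_int _ _) fun x _ => hν.2 ⟨V x, hVab x, rfl⟩
    rw [hdiff, abs_mul, abs_of_pos (hΦ t t₀ ▸ exp_pos _)]
    exact ⟨rfl, mul_le_mul_of_nonneg_right hΦ_le (abs_nonneg _)⟩
  refine ⟨contraction, fun Q₁ Q₂ hQ₁ hQ₂ ⟨C, hC⟩ t => ?_⟩
  refine squeeze_zero_norm' ?_ (tendsto_exp_neg_mul_sub_mul_atBot hνpos t C)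
  filter_upwards [eventually_le_atBot t] with s hs
  exact (contraction s (Q₁ s) (Q₂ s) (hQ₁ s) (hQ₂ s) t hs).2.trans
    (mul_le_mul_of_nonneg_left (hC s) (exp_pos _).le)

/-- convergence part of Theorem 1: two solutions of
`Ṗ_t = k01(V_t) − K(V_t)·P_t` driven by the same `[a,b]`-valued input but with
different initial values satisfy
`|P¹_t − P²_t| = Φ_{t,t₀}·|P¹_{t₀} − P²_{t₀}| ≤ e^{−ν(t−t₀)}·|P¹_{t₀} − P²_{t₀}|`;
hence (for families of solutions with uniformly bounded initial gaps started at
time `s`) the difference at any fixed time `t` tends to `0` as `s → −∞`. -/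
theorem dms_exponential_contraction
    (k01 k10 K : ℝ → ℝ)
    (hk01c : Continuous k01) (hk10c : Continuous k10)
    (hk01 : ∀ v, 0 ≤ k01 v) (hk10 : ∀ v, 0 ≤ k10 v)
    (hK : ∀ v, K v = k01 v + k10 v)
    (a b ν : ℝ) (hab : a ≤ b)
    (hKpos : ∀ v ∈ Set.Icc a b, 0 < K v)
    (hν : IsLeast (K '' Set.Icc a b) ν)
    (V : ℝ → ℝ) (hV : PiecewiseContinuous V) (hVab : ∀ t, V t ∈ Set.Icc a b)
    (Φ : ℝ → ℝ → ℝ) (hΦ : ∀ t τ, Φ t τ = Real.exp (-∫ s in τ..t, K (V s))) :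
    (∀ (t₀ : ℝ) (P₁ P₂ : ℝ → ℝ),
      (∀ t ∈ Set.Ici t₀, HasDerivAt P₁ (k01 (V t) - K (V t) * P₁ t) t) →
      (∀ t ∈ Set.Ici t₀, HasDerivAt P₂ (k01 (V t) - K (V t) * P₂ t) t) →
      ∀ t ∈ Set.Ici t₀,
        |P₁ t - P₂ t| = Φ t t₀ * |P₁ t₀ - P₂ t₀| ∧
        |P₁ t - P₂ t| ≤ Real.exp (-ν * (t - t₀)) * |P₁ t₀ - P₂ t₀|) ∧
    (∀ Q₁ Q₂ : ℝ → ℝ → ℝ,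
      (∀ s : ℝ, ∀ t ∈ Set.Ici s, HasDerivAt (Q₁ s) (k01 (V t) - K (V t) * Q₁ s t) t) →
      (∀ s : ℝ, ∀ t ∈ Set.Ici s, HasDerivAt (Q₂ s) (k01 (V t) - K (V t) * Q₂ s t) t) →
      (∃ C : ℝ, ∀ s : ℝ, |Q₁ s s - Q₂ s s| ≤ C) →
      ∀ t : ℝ, Filter.Tendsto (fun s => Q₁ s t - Q₂ s t) Filter.atBot (nhds 0)) :=
  dms_exponential_contraction_general k01 k10 K hk01c hk10c hK a b ν hKpos hν V hV hVab Φ hΦ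
end

section
/- Let k01, k10 : ℝ → ℝ be continuous nonnegative functions with K = k01 + k10 strictly positive on a compact interval [a,b], ν = min_{v ∈ [a,b]} K(v) > 0, and let V : ℝ → ℝ be measurable with V_t ∈ [a,b] for all t ∈ ℝ. Then for every t ∈ ℝ the improper integral P̄_t = ∫_{−∞}^t exp(−∫_τ^t K(V_s) ds)·k01(V_τ) dτ converges, satisfies 0 ≤ P̄_t ≤ 1 for all t, the function P̄ solves the ODE Ṗ_t = k01(V_t) − K(V_t)·P_t on all of ℝ, and P̄ is the unique solution of this ODE that is defined and bounded on all of ℝ; moreover every solution started at any initial value P_{t₀} converges to P̄_t as t₀ → −∞. -/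
/-!
Let `A` be a primitive of the rate `g = K ∘ V` and `k = k01 ∘ V`, so that `0 ≤ k ≤ g`,
`Φ t τ = exp (A τ - A t)`, and `ν ≤ g` forces `A → -∞` at `-∞`. Since `exp A` is a primitive of
`g * exp A`, `∫_s^t Φ t τ g τ dτ = 1 - Φ t s`; this bounds `∫_s^t Φ t τ k τ dτ` by `1`, which
gives convergence of the improper integral and `P̄ ≤ 1`. Writing
`P̄ t = exp (-A t) * ∫_{-∞}^t exp (A τ) k τ dτ`, the product rule yields the ODE. For a second
bounded solution `Q`, `D = Q - P̄` solves `Ḋ = -g D`, so `exp A * D` is constant and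
`D t = Φ t s * D s → 0` as `s → -∞`.

All solutions are only absolutely continuous: derivatives exist almost everywhere (Lebesgue
differentiation), and the fundamental theorem of calculus for absolutely continuous functions turns
the a.e. product and chain rules back into integral equations.
-/

open MeasureTheory Set Filter Real Topology

def IsPrimitive (F f : ℝ → ℝ) : Prop :=
  ∀ s t, F t = F s + ∫ τ in s..t, f τ

theorem MeasureTheory.LocallyIntegrable.intervalIntegrable {f : ℝ → ℝ}
    (hf : LocallyIntegrable f volume) (a b : ℝ) : IntervalIntegrable f volume a b :=
  (hf.integrableOn_isCompact isCompact_uIcc).intervalIntegrable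

theorem MeasureTheory.locallyIntegrable_of_abs_le {f : ℝ → ℝ} {M : ℝ}
    (hf : AEStronglyMeasurable f volume) (hfM : ∀ x, |f x| ≤ M) : LocallyIntegrable f volume :=
  (locallyIntegrable_const M).mono hf
    (ae_of_all _ fun x => (hfM x).trans (le_abs_self M))

theorem LocallyLipschitz.absolutelyContinuousOnInterval {F : ℝ → ℝ} (hF : LocallyLipschitz F)
    (a b : ℝ) : AbsolutelyContinuousOnInterval F a b :=
  (hF.locallyLipschitzOn.exists_lipschitzOnWith_of_compact isCompact_uIcc).choose_spec
    |>.absolutelyContinuousOnInterval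

theorem isPrimitive_of_ae_hasDerivAt {F f : ℝ → ℝ}
    (hF : ∀ a b, AbsolutelyContinuousOnInterval F a b) (hf : ∀ᵐ x, HasDerivAt F (f x) x) :
    IsPrimitive F f := by
  intro s t
  have hderiv : ∫ τ in s..t, deriv F τ = ∫ τ in s..t, f τ :=
    intervalIntegral.integral_congr_ae (by filter_upwards [hf] with x hx _ using hx.deriv)
  rw [← hderiv, (hF s t).integral_deriv_eq_sub]
  ring

theorem isPrimitive_integral {f : ℝ → ℝ} (hf : LocallyIntegrable f volume) (c : ℝ) :
    IsPrimitive (fun t => ∫ τ in c..t, f τ) f := fun s t =>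
  (intervalIntegral.integral_add_adjacent_intervals (hf.intervalIntegrable c s)
    (hf.intervalIntegrable s t)).symm

theorem isPrimitive_integral_Iic {f : ℝ → ℝ} (hf : ∀ t, IntegrableOn f (Iic t)) :
    IsPrimitive (fun t => ∫ τ in Iic t, f τ) f := fun s t => by
  rw [← intervalIntegral.integral_Iic_sub_Iic (hf s) (hf t)]
  ring

namespace IsPrimitive

variable {F G f g : ℝ → ℝ}

theorem neg (hF : IsPrimitive F f) : IsPrimitive (fun t => -F t) (fun t => -f t) := fun s t => by
  dsimp only
  rw [hF s t, intervalIntegral.integral_neg]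
  ring

theorem sub (hF : IsPrimitive F f) (hG : IsPrimitive G g) (hf : LocallyIntegrable f volume)
    (hg : LocallyIntegrable g volume) :
    IsPrimitive (fun t => F t - G t) (fun t => f t - g t) := fun s t => by
  dsimp only
  rw [hF s t, hG s t,
    intervalIntegral.integral_sub (hf.intervalIntegrable s t) (hg.intervalIntegrable s t)]
  ring

theorem continuous (hF : IsPrimitive F f) (hf : LocallyIntegrable f volume) : Continuous F := by
  rw [funext (hF 0)]
  exact continuous_const.add (intervalIntegral.continuous_primitive hf.intervalIntegrable 0)

theorem ae_hasDerivAt (hF : IsPrimitive F f) (hf : LocallyIntegrable f volume) :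
    ∀ᵐ x, HasDerivAt F (f x) x := by
  filter_upwards [LocallyIntegrable.ae_hasDerivAt_integral hf] with x hx
  rw [funext (hF 0)]
  exact (hx 0).const_add _

theorem absolutelyContinuousOnInterval (hF : IsPrimitive F f) (hf : LocallyIntegrable f volume)
    (a b : ℝ) : AbsolutelyContinuousOnInterval F a b := by
  rw [funext (hF a)]
  exact (LipschitzWith.const (F a)).lipschitzOnWith.absolutelyContinuousOnInterval.fun_add
    ((hf.intervalIntegrable a b).absolutelyContinuousOnInterval_intervalIntegral left_mem_uIcc)

theorem lipschitzWith {M : ℝ} (hF : IsPrimitive F f) (hfM : ∀ x, |f x| ≤ M) :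
    LipschitzWith M.toNNReal F := by
  refine LipschitzWith.of_dist_le_mul fun x y => ?_
  rw [Real.dist_eq, hF y x, add_sub_cancel_left, Real.dist_eq]
  exact (intervalIntegral.norm_integral_le_of_norm_le_const (f := f) fun τ _ => hfM τ).trans
    (mul_le_mul_of_nonneg_right (Real.le_coe_toNNReal M) (abs_nonneg _))

theorem mul (hF : IsPrimitive F f) (hG : IsPrimitive G g) (hf : LocallyIntegrable f volume)
    (hg : LocallyIntegrable g volume) :
    IsPrimitive (fun t => F t * G t) (fun t => f t * G t + F t * g t) :=
  isPrimitive_of_ae_hasDerivAt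
    (fun a b => (hF.absolutelyContinuousOnInterval hf a b).fun_mul
      (hG.absolutelyContinuousOnInterval hg a b))
    (by filter_upwards [hF.ae_hasDerivAt hf, hG.ae_hasDerivAt hg] with x hFx hGx
          using hFx.mul hGx)

theorem exp {M : ℝ} (hF : IsPrimitive F f) (hf : LocallyIntegrable f volume)
    (hfM : ∀ x, |f x| ≤ M) :
    IsPrimitive (fun t => Real.exp (F t)) (fun t => f t * Real.exp (F t)) :=
  isPrimitive_of_ae_hasDerivAt
    ((Real.contDiff_exp.locallyLipschitz.comp (hF.lipschitzWith hfM).locallyLipschitz)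
      |>.absolutelyContinuousOnInterval)
    (by filter_upwards [hF.ae_hasDerivAt hf] with x hx
          using by simpa [mul_comm] using hx.exp)

end IsPrimitive

noncomputable def steadyState (A k : ℝ → ℝ) (t : ℝ) : ℝ :=
  ∫ τ in Iic t, Real.exp (A τ - A t) * k τ

section LinearODE

variable {g k A : ℝ → ℝ} {M : ℝ}

theorem IsPrimitive.tendsto_atBot_atBot {ν : ℝ} (hA : IsPrimitive A g)
    (hg : LocallyIntegrable g volume) (hν : 0 < ν) (hgν : ∀ x, ν ≤ g x) :
    Tendsto A atBot atBot := by
  refine tendsto_atBot_mono' atBot ?_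
    (tendsto_atBot_add_const_left _ (A 0) ((tendsto_const_mul_atBot_of_pos hν).mpr tendsto_id))
  filter_upwards [eventually_le_atBot 0] with s hs
  have hlow : ν * (0 - s) ≤ ∫ τ in s..0, g τ := by
    calc ν * (0 - s) = ∫ _ in s..0, ν := by simp [mul_comm]
      _ ≤ ∫ τ in s..0, g τ := intervalIntegral.integral_mono_on hs intervalIntegrable_const
          (hg.intervalIntegrable s 0) fun x _ => hgν x
  have hs0 : A 0 = A s + ∫ τ in s..0, g τ := hA s 0
  simp only [id]
  linarith

theorem tendsto_exp_sub_atBot (hA : Tendsto A atBot atBot) (t : ℝ) :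
    Tendsto (fun s => Real.exp (A s - A t)) atBot (𝓝 0) :=
  tendsto_exp_atBot.comp (tendsto_atBot_add_const_right _ (-A t) hA)

theorem IsPrimitive.integral_exp_sub_mul (hA : IsPrimitive A g) (hg : LocallyIntegrable g volume)
    (hgM : ∀ x, |g x| ≤ M) (s t : ℝ) :
    ∫ τ in s..t, Real.exp (A τ - A t) * g τ = 1 - Real.exp (A s - A t) := by
  have hfactor : ∫ τ in s..t, Real.exp (A τ - A t) * g τ
      = Real.exp (-A t) * ∫ τ in s..t, g τ * Real.exp (A τ) := by
    rw [← intervalIntegral.integral_const_mul]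
    congr 1 with τ
    rw [sub_eq_neg_add, Real.exp_add]
    ring
  rw [hfactor, ← sub_eq_of_eq_add' ((hA.exp hg hgM) s t), mul_sub, ← Real.exp_add,
    ← Real.exp_add, neg_add_cancel, Real.exp_zero, neg_add_eq_sub]

theorem IsPrimitive.integral_norm_exp_sub_mul_le_one (hA : IsPrimitive A g)
    (hg : LocallyIntegrable g volume) (hgM : ∀ x, |g x| ≤ M) (hk : LocallyIntegrable k volume)
    (hk0 : ∀ x, 0 ≤ k x) (hkg : ∀ x, k x ≤ g x) {s t : ℝ} (hst : s ≤ t) :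
    ∫ τ in s..t, ‖Real.exp (A τ - A t) * k τ‖ ≤ 1 := by
  have hAc := hA.continuous hg
  calc ∫ τ in s..t, ‖Real.exp (A τ - A t) * k τ‖
      ≤ ∫ τ in s..t, Real.exp (A τ - A t) * g τ := by
        refine intervalIntegral.integral_mono_on hst
          ((hk.continuous_mul (by fun_prop)).intervalIntegrable s t).norm
          ((hg.continuous_mul (by fun_prop)).intervalIntegrable s t) fun τ _ => ?_
        rw [norm_mul, Real.norm_of_nonneg (Real.exp_pos _).le, Real.norm_of_nonneg (hk0 τ)]
        exact mul_le_mul_of_nonneg_left (hkg τ) (Real.exp_pos _).le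
    _ = 1 - Real.exp (A s - A t) := hA.integral_exp_sub_mul hg hgM s t
    _ ≤ 1 := sub_le_self _ (Real.exp_pos _).le

theorem IsPrimitive.integrableOn_exp_sub_mul_Iic (hA : IsPrimitive A g)
    (hg : LocallyIntegrable g volume) (hgM : ∀ x, |g x| ≤ M) (hk : LocallyIntegrable k volume)
    (hk0 : ∀ x, 0 ≤ k x) (hkg : ∀ x, k x ≤ g x) (t : ℝ) :
    IntegrableOn (fun τ => Real.exp (A τ - A t) * k τ) (Iic t) := by
  have hAc := hA.continuous hg
  refine integrableOn_Iic_of_intervalIntegral_norm_bounded 1 t (fun i => ?_) tendsto_id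
    (eventually_le_atBot t |>.mono fun i hi =>
      hA.integral_norm_exp_sub_mul_le_one hg hgM hk hk0 hkg hi)
  exact ((hk.continuous_mul (by fun_prop)).integrableOn_isCompact isCompact_Icc).mono_set
    Ioc_subset_Icc_self

theorem IsPrimitive.steadyState_mem_Icc (hA : IsPrimitive A g) (hg : LocallyIntegrable g volume)
    (hgM : ∀ x, |g x| ≤ M) (hk : LocallyIntegrable k volume) (hk0 : ∀ x, 0 ≤ k x)
    (hkg : ∀ x, k x ≤ g x) (t : ℝ) : steadyState A k t ∈ Icc 0 1 := by
  refine ⟨setIntegral_nonneg measurableSet_Iic fun τ _ => mul_nonneg (Real.exp_pos _).le (hk0 τ),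
    le_of_tendsto (intervalIntegral_tendsto_integral_Iic t
      (hA.integrableOn_exp_sub_mul_Iic hg hgM hk hk0 hkg t) tendsto_id) ?_⟩
  filter_upwards [eventually_le_atBot t] with i hi
  exact (le_abs_self _).trans ((intervalIntegral.norm_integral_le_integral_norm hi).trans
    (hA.integral_norm_exp_sub_mul_le_one hg hgM hk hk0 hkg hi))

theorem steadyState_eq_exp_neg_mul (A k : ℝ → ℝ) (t : ℝ) :
    steadyState A k t = Real.exp (-A t) * ∫ τ in Iic t, k τ * Real.exp (A τ) := by
  rw [steadyState, ← integral_const_mul]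
  congr 1 with τ
  rw [sub_eq_neg_add, Real.exp_add]
  ring

theorem IsPrimitive.integrableOn_mul_exp_Iic (hA : IsPrimitive A g)
    (hg : LocallyIntegrable g volume) (hgM : ∀ x, |g x| ≤ M) (hk : LocallyIntegrable k volume)
    (hk0 : ∀ x, 0 ≤ k x) (hkg : ∀ x, k x ≤ g x) (t : ℝ) :
    IntegrableOn (fun τ => k τ * Real.exp (A τ)) (Iic t) :=
  IntegrableOn.congr_fun
    ((hA.integrableOn_exp_sub_mul_Iic hg hgM hk hk0 hkg t).const_mul (Real.exp (A t)))
    (fun τ _ => by rw [← mul_assoc, ← Real.exp_add, add_sub_cancel, mul_comm]) measurableSet_Iic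

theorem IsPrimitive.continuous_steadyState (hA : IsPrimitive A g)
    (hg : LocallyIntegrable g volume) (hgM : ∀ x, |g x| ≤ M) (hk : LocallyIntegrable k volume)
    (hk0 : ∀ x, 0 ≤ k x) (hkg : ∀ x, k x ≤ g x) : Continuous (steadyState A k) := by
  have hAc := hA.continuous hg
  rw [funext (steadyState_eq_exp_neg_mul A k)]
  exact (by fun_prop : Continuous fun t => Real.exp (-A t)).mul
    ((isPrimitive_integral_Iic (hA.integrableOn_mul_exp_Iic hg hgM hk hk0 hkg)).continuous
      (hk.mul_continuous (by fun_prop)))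

theorem IsPrimitive.isPrimitive_steadyState (hA : IsPrimitive A g)
    (hg : LocallyIntegrable g volume) (hgM : ∀ x, |g x| ≤ M) (hk : LocallyIntegrable k volume)
    (hk0 : ∀ x, 0 ≤ k x) (hkg : ∀ x, k x ≤ g x) :
    IsPrimitive (steadyState A k) (fun τ => k τ - g τ * steadyState A k τ) := by
  have hAc := hA.continuous hg
  have hW := isPrimitive_integral_Iic (hA.integrableOn_mul_exp_Iic hg hgM hk hk0 hkg)
  have hE : IsPrimitive (fun t => Real.exp (-A t)) fun t => -g t * Real.exp (-A t) :=
    hA.neg.exp hg.neg (M := M) (by simpa using hgM)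
  rw [funext (steadyState_eq_exp_neg_mul A k)]
  convert hE.mul hW (hg.neg.mul_continuous (by fun_prop)) (hk.mul_continuous (by fun_prop))
    using 2 with τ
  have hcancel : Real.exp (-A τ) * Real.exp (A τ) = 1 := by rw [← Real.exp_add]; simp
  linear_combination (-k τ) * hcancel

theorem IsPrimitive.eq_zero_of_isPrimitive_neg_mul {D : ℝ → ℝ} {C : ℝ} (hA : IsPrimitive A g)
    (hg : LocallyIntegrable g volume) (hgM : ∀ x, |g x| ≤ M) (hAbot : Tendsto A atBot atBot)
    (hDc : Continuous D) (hD : IsPrimitive D fun τ => -(g τ * D τ)) (hDC : ∀ t, |D t| ≤ C) :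
    D = 0 := by
  have hAc := hA.continuous hg
  have hconst := (hA.exp hg hgM).mul hD (hg.mul_continuous (by fun_prop))
    (hg.mul_continuous hDc).neg
  have hrepr : ∀ t s, Real.exp (A s - A t) * D s = D t := fun t s => by
    have h := hconst s t
    simp only [show ∀ τ, g τ * Real.exp (A τ) * D τ + Real.exp (A τ) * -(g τ * D τ) = 0 from
      fun τ => by ring, intervalIntegral.integral_zero, add_zero] at h
    rw [sub_eq_add_neg, Real.exp_add, mul_right_comm, ← h, mul_right_comm, ← Real.exp_add,
      add_neg_cancel, Real.exp_zero, one_mul]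
  funext t
  have hlim : Tendsto (fun s => Real.exp (A s - A t) * D s) atBot (𝓝 0) :=
    (tendsto_exp_sub_atBot hAbot t).zero_mul_isBoundedUnder_le (isBoundedUnder_of ⟨C, hDC⟩)
  exact tendsto_nhds_unique (hlim.congr (hrepr t)) tendsto_const_nhds |>.symm

theorem IsPrimitive.tendsto_add_integral_steadyState (hA : IsPrimitive A g)
    (hg : LocallyIntegrable g volume) (hgM : ∀ x, |g x| ≤ M) (hk : LocallyIntegrable k volume)
    (hk0 : ∀ x, 0 ≤ k x) (hkg : ∀ x, k x ≤ g x) (hAbot : Tendsto A atBot atBot) (p t : ℝ) :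
    Tendsto (fun t₀ => Real.exp (A t₀ - A t) * p + ∫ τ in t₀..t, Real.exp (A τ - A t) * k τ)
      atBot (𝓝 (steadyState A k t)) := by
  simpa [steadyState] using ((tendsto_exp_sub_atBot hAbot t).mul_const p).add
    (intervalIntegral_tendsto_integral_Iic t
      (hA.integrableOn_exp_sub_mul_Iic hg hgM hk hk0 hkg t) tendsto_id)

theorem IsPrimitive.eq_steadyState {Q : ℝ → ℝ} (hA : IsPrimitive A g)
    (hg : LocallyIntegrable g volume) (hgM : ∀ x, |g x| ≤ M) (hk : LocallyIntegrable k volume)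
    (hk0 : ∀ x, 0 ≤ k x) (hkg : ∀ x, k x ≤ g x) (hAbot : Tendsto A atBot atBot)
    (hQc : Continuous Q) (hQb : ∃ C, ∀ t, |Q t| ≤ C)
    (hQ : IsPrimitive Q fun τ => k τ - g τ * Q τ) : Q = steadyState A k := by
  obtain ⟨C, hC⟩ := hQb
  have hPc := hA.continuous_steadyState hg hgM hk hk0 hkg
  have hPb (t : ℝ) : |steadyState A k t| ≤ 1 := by
    obtain ⟨h0, h1⟩ := hA.steadyState_mem_Icc hg hgM hk hk0 hkg t
    exact abs_le.mpr ⟨by linarith, h1⟩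
  have hD : IsPrimitive (fun t => Q t - steadyState A k t)
      fun τ => -(g τ * (Q τ - steadyState A k τ)) := by
    convert hQ.sub (hA.isPrimitive_steadyState hg hgM hk hk0 hkg)
      (hk.sub (hg.mul_continuous hQc)) (hk.sub (hg.mul_continuous hPc)) using 2 with τ
    ring
  have hzero := hA.eq_zero_of_isPrimitive_neg_mul hg hgM hAbot (hQc.sub hPc) hD
    fun t => (abs_sub _ _).trans (add_le_add (hC t) (hPb t))
  exact funext fun t => sub_eq_zero.mp (congrFun hzero t)

end LinearODE

theorem dms_unique_bounded_entire_solution_general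
    (k01 k10 K : ℝ → ℝ)
    (hk01c : Continuous k01) (hk10c : Continuous k10)
    (hk01 : ∀ v, 0 ≤ k01 v) (hk10 : ∀ v, 0 ≤ k10 v)
    (hK : ∀ v, K v = k01 v + k10 v)
    (a b ν : ℝ)
    (hν : IsLeast (K '' Set.Icc a b) ν) (hν0 : 0 < ν)
    (V : ℝ → ℝ) (hVm : Measurable V) (hVab : ∀ t, V t ∈ Set.Icc a b)
    (Φ : ℝ → ℝ → ℝ) (hΦ : ∀ t τ, Φ t τ = Real.exp (-∫ s in τ..t, K (V s)))
    (Pbar : ℝ → ℝ)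
    (hPbar : ∀ t, Pbar t = ∫ τ in Set.Iic t, Φ t τ * k01 (V τ)) :
    (∀ t : ℝ, IntegrableOn (fun τ => Φ t τ * k01 (V τ)) (Set.Iic t)) ∧
    (∀ t : ℝ, 0 ≤ Pbar t ∧ Pbar t ≤ 1) ∧
    Continuous Pbar ∧
    (∀ s t : ℝ, Pbar t = Pbar s + ∫ τ in s..t, (k01 (V τ) - K (V τ) * Pbar τ)) ∧
    (∀ Q : ℝ → ℝ, Continuous Q → (∃ C : ℝ, ∀ t, |Q t| ≤ C) →
      (∀ s t : ℝ, Q t = Q s + ∫ τ in s..t, (k01 (V τ) - K (V τ) * Q τ)) →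
      Q = Pbar) ∧
    (∀ p t : ℝ, Filter.Tendsto
      (fun t₀ => Φ t t₀ * p + ∫ τ in t₀..t, Φ t τ * k01 (V τ))
      Filter.atBot (nhds (Pbar t))) := by
  have hKc : Continuous K := funext hK ▸ hk01c.add hk10c
  obtain ⟨M, hM⟩ := (isCompact_Icc (a := a) (b := b)).bddAbove_image hKc.continuousOn
  have hgν (τ : ℝ) : ν ≤ K (V τ) := hν.2 ⟨V τ, hVab τ, rfl⟩
  have hgM (τ : ℝ) : |K (V τ)| ≤ M :=
    abs_le.mpr ⟨by linarith [hgν τ, hM ⟨V τ, hVab τ, rfl⟩], hM ⟨V τ, hVab τ, rfl⟩⟩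
  have hkg (τ : ℝ) : k01 (V τ) ≤ K (V τ) := by linarith [hK (V τ), hk10 (V τ)]
  have hg : LocallyIntegrable (fun τ => K (V τ)) volume :=
    locallyIntegrable_of_abs_le (hKc.measurable.comp hVm).aestronglyMeasurable hgM
  have hk : LocallyIntegrable (fun τ => k01 (V τ)) volume :=
    locallyIntegrable_of_abs_le (hk01c.measurable.comp hVm).aestronglyMeasurable fun τ =>
      (abs_of_nonneg (hk01 (V τ))).trans_le ((hkg τ).trans ((le_abs_self _).trans (hgM τ)))
  set A := fun t => ∫ τ in (0 : ℝ)..t, K (V τ)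
  have hA : IsPrimitive A fun τ => K (V τ) := isPrimitive_integral hg 0
  have hΦA : Φ = fun t τ => Real.exp (A τ - A t) :=
    funext₂ fun t τ => by rw [hΦ, hA τ t]; ring_nf
  subst hΦA
  obtain rfl : Pbar = steadyState A (fun τ => k01 (V τ)) := funext hPbar
  have hAbot := hA.tendsto_atBot_atBot hg hν0 hgν
  exact ⟨hA.integrableOn_exp_sub_mul_Iic hg hgM hk (fun τ => hk01 _) hkg,
    hA.steadyState_mem_Icc hg hgM hk (fun τ => hk01 _) hkg,
    hA.continuous_steadyState hg hgM hk (fun τ => hk01 _) hkg,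
    hA.isPrimitive_steadyState hg hgM hk (fun τ => hk01 _) hkg,
    fun Q hQc hQb hQ => hA.eq_steadyState hg hgM hk (fun τ => hk01 _) hkg hAbot hQc hQb hQ,
    hA.tendsto_add_integral_steadyState hg hgM hk (fun τ => hk01 _) hkg hAbot⟩

/-- convergence property of Theorem 1: the improper integral
`P̄_t = ∫_{−∞}^t exp(−∫_τ^t K(V_s) ds)·k01(V_τ) dτ` converges, takes values in
`[0,1]`, solves the DMS ODE (in Carathéodory integral form) on all of `ℝ`, is
the unique bounded (continuous) entire solution, and every solution started at
any initial value at time `t₀` converges to `P̄_t` as `t₀ → −∞`. -/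
theorem dms_unique_bounded_entire_solution
    (k01 k10 K : ℝ → ℝ)
    (hk01c : Continuous k01) (hk10c : Continuous k10)
    (hk01 : ∀ v, 0 ≤ k01 v) (hk10 : ∀ v, 0 ≤ k10 v)
    (hK : ∀ v, K v = k01 v + k10 v)
    (a b ν : ℝ) (hab : a ≤ b)
    (hKpos : ∀ v ∈ Set.Icc a b, 0 < K v)
    (hν : IsLeast (K '' Set.Icc a b) ν) (hν0 : 0 < ν)
    (V : ℝ → ℝ) (hVm : Measurable V) (hVab : ∀ t, V t ∈ Set.Icc a b)
    (Φ : ℝ → ℝ → ℝ) (hΦ : ∀ t τ, Φ t τ = Real.exp (-∫ s in τ..t, K (V s)))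
    (Pbar : ℝ → ℝ)
    (hPbar : ∀ t, Pbar t = ∫ τ in Set.Iic t, Φ t τ * k01 (V τ)) :
    (∀ t : ℝ, IntegrableOn (fun τ => Φ t τ * k01 (V τ)) (Set.Iic t)) ∧
    (∀ t : ℝ, 0 ≤ Pbar t ∧ Pbar t ≤ 1) ∧
    Continuous Pbar ∧
    (∀ s t : ℝ, Pbar t = Pbar s + ∫ τ in s..t, (k01 (V τ) - K (V τ) * Pbar τ)) ∧
    (∀ Q : ℝ → ℝ, Continuous Q → (∃ C : ℝ, ∀ t, |Q t| ≤ C) →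
      (∀ s t : ℝ, Q t = Q s + ∫ τ in s..t, (k01 (V τ) - K (V τ) * Q τ)) →
      Q = Pbar) ∧
    (∀ p t : ℝ, Filter.Tendsto
      (fun t₀ => Φ t t₀ * p + ∫ τ in t₀..t, Φ t τ * k01 (V τ))
      Filter.atBot (nhds (Pbar t))) :=
  dms_unique_bounded_entire_solution_general k01 k10 K hk01c hk10c hk01 hk10 hK a b ν hν hν0 V hVm
    hVab Φ hΦ Pbar hPbar
end

section
/- Let A : ℝ → ℝ be continuously differentiable, let 𝒟 = [a,b] be a compact interval with A(v) ≤ −ν < 0 for all v ∈ 𝒟, and set g₂ = max_{v ∈ 𝒟} |A'(v)|. Then for any two measurable signals V, V' : (−∞,0] → 𝒟 and any τ ≤ 0, | exp(∫_τ^0 A(V_s) ds) − exp(∫_τ^0 A(V'_s) ds) | ≤ e^{ν τ} · g₂ · ∫_τ^0 |V_s − V'_s| ds. -/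
/-!
Both exponents are integrals over `[τ, 0]` of functions bounded above by `-ν`, hence at most
`ν τ`, and the exponential is `e^{ν τ}`-Lipschitz on `(-∞, ν τ]`. The difference of the exponents
is at most `∫ |A(V_s) - A(V'_s)| ds`, and by the mean value theorem `A` is `g₂`-Lipschitz on
`[a, b]`.
-/

open Set MeasureTheory

theorem Real.abs_exp_sub_exp_le_of_le {x y M : ℝ} (hx : x ≤ M) (hy : y ≤ M) :
    |exp x - exp y| ≤ exp M * |x - y| := by
  simpa only [Real.norm_eq_abs, Real.deriv_exp, abs_exp, exp_le_exp] using
    (convex_Iic M).norm_image_sub_le_of_norm_deriv_le (fun z _ => differentiableAt_exp)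
      (fun z hz => by simpa using hz) hy hx

theorem Continuous.intervalIntegrable_comp_of_mapsTo_isCompact_s8 {E : Type*} [NormedAddCommGroup E]
    {f : ℝ → E} {u : ℝ → ℝ} {s : Set ℝ} {a b : ℝ} (hf : Continuous f) (hs : IsCompact s)
    (hu : Measurable u) (hus : ∀ t ∈ uIoc a b, u t ∈ s) :
    IntervalIntegrable (fun t => f (u t)) volume a b := by
  obtain ⟨C, hC⟩ := hs.exists_bound_of_continuousOn hf.continuousOn
  rw [intervalIntegrable_iff]
  exact .of_bound measure_Ioc_lt_top (hf.comp_aestronglyMeasurable hu.aestronglyMeasurable) C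
    (ae_restrict_of_forall_mem measurableSet_uIoc fun t ht => hC _ (hus t ht))

theorem abs_intervalIntegral_comp_sub_comp_le {f u v : ℝ → ℝ} {s : Set ℝ} {C a b : ℝ}
    (hab : a ≤ b) (hf : ∀ x ∈ s, ∀ y ∈ s, |f x - f y| ≤ C * |x - y|)
    (hfu : IntervalIntegrable (fun t => f (u t)) volume a b)
    (hfv : IntervalIntegrable (fun t => f (v t)) volume a b)
    (huv : IntervalIntegrable (fun t => |u t - v t|) volume a b)
    (hu : ∀ t ∈ Icc a b, u t ∈ s) (hv : ∀ t ∈ Icc a b, v t ∈ s) :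
    |(∫ t in a..b, f (u t)) - ∫ t in a..b, f (v t)| ≤ C * ∫ t in a..b, |u t - v t| := by
  rw [← intervalIntegral.integral_sub hfu hfv, ← intervalIntegral.integral_const_mul]
  refine (intervalIntegral.abs_integral_le_integral_abs hab).trans ?_
  exact intervalIntegral.integral_mono_on hab (hfu.sub hfv).abs (huv.const_mul C)
    fun t ht => hf _ (hu t ht) _ (hv t ht)

theorem dms_transition_function_input_lipschitz_general
    (A : ℝ → ℝ) (hA : ContDiff ℝ 1 A)
    (a b ν : ℝ)
    (hAν : ∀ v ∈ Set.Icc a b, A v ≤ -ν)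
    (g₂ : ℝ) (hg₂ : IsGreatest ((fun v => |deriv A v|) '' Set.Icc a b) g₂)
    (V V' : ℝ → ℝ) (hVm : Measurable V) (hV'm : Measurable V')
    (hV : ∀ t ≤ (0 : ℝ), V t ∈ Set.Icc a b)
    (hV' : ∀ t ≤ (0 : ℝ), V' t ∈ Set.Icc a b)
    (τ : ℝ) (hτ : τ ≤ 0) :
    |Real.exp (∫ s in τ..0, A (V s)) - Real.exp (∫ s in τ..0, A (V' s))| ≤
      Real.exp (ν * τ) * g₂ * ∫ s in τ..0, |V s - V' s| := by
  have hint {f : ℝ → ℝ} (hf : Continuous f) {W : ℝ → ℝ} (hWm : Measurable W)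
      (hW : ∀ t ≤ (0 : ℝ), W t ∈ Icc a b) : IntervalIntegrable (fun s => f (W s)) volume τ 0 :=
    hf.intervalIntegrable_comp_of_mapsTo_isCompact_s8 isCompact_Icc hWm
      fun t ht => hW t (by rw [uIoc_of_le hτ] at ht; exact ht.2)
  have hexponent {W : ℝ → ℝ} (hWm : Measurable W) (hW : ∀ t ≤ (0 : ℝ), W t ∈ Icc a b) :
      ∫ s in τ..0, A (W s) ≤ ν * τ :=
    calc ∫ s in τ..0, A (W s) ≤ ∫ _ in τ..0, -ν :=
          intervalIntegral.integral_mono_on hτ (hint hA.continuous hWm hW)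
            intervalIntegrable_const fun s hs => hAν _ (hW s hs.2)
      _ = ν * τ := by simp only [intervalIntegral.integral_const, smul_eq_mul]; ring
  have hLip : ∀ x ∈ Icc a b, ∀ y ∈ Icc a b, |A x - A y| ≤ g₂ * |x - y| := fun x hx y hy => by
    simpa only [Real.norm_eq_abs] using (convex_Icc a b).norm_image_sub_le_of_norm_deriv_le
      (fun z _ => (hA.differentiable one_ne_zero).differentiableAt)
      (fun z hz => hg₂.2 ⟨z, hz, rfl⟩) hy hx
  have hVV' : IntervalIntegrable (fun s => |V s - V' s|) volume τ 0 :=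
    ((hint continuous_id hVm hV).sub (hint continuous_id hV'm hV')).abs
  calc _ ≤ Real.exp (ν * τ) * |(∫ s in τ..0, A (V s)) - ∫ s in τ..0, A (V' s)| :=
        Real.abs_exp_sub_exp_le_of_le (hexponent hVm hV) (hexponent hV'm hV')
    _ ≤ Real.exp (ν * τ) * (g₂ * ∫ s in τ..0, |V s - V' s|) := by
        gcongr
        exact abs_intervalIntegral_comp_sub_comp_le hτ hLip (hint hA.continuous hVm hV)
          (hint hA.continuous hV'm hV') hVV' (fun t ht => hV t ht.2) (fun t ht => hV' t ht.2)
    _ = Real.exp (ν * τ) * g₂ * ∫ s in τ..0, |V s - V' s| := (mul_assoc _ _ _).symm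

/-- key intermediate bound for Theorem 1: Lipschitz estimate of
the transition function `Φ_{0,τ}(V) = exp(∫_τ^0 A(V_s) ds)` with respect to the
input, for inputs valued in a compact interval `𝒟 = [a,b]` on which
`A(v) ≤ −ν < 0`, with `g₂ = max_{v ∈ 𝒟} |A'(v)|`. -/
theorem dms_transition_function_input_lipschitz
    (A : ℝ → ℝ) (hA : ContDiff ℝ 1 A)
    (a b ν : ℝ) (hab : a ≤ b) (hν : 0 < ν)
    (hAν : ∀ v ∈ Set.Icc a b, A v ≤ -ν)
    (g₂ : ℝ) (hg₂ : IsGreatest ((fun v => |deriv A v|) '' Set.Icc a b) g₂)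
    (V V' : ℝ → ℝ) (hVm : Measurable V) (hV'm : Measurable V')
    (hV : ∀ t ≤ (0 : ℝ), V t ∈ Set.Icc a b)
    (hV' : ∀ t ≤ (0 : ℝ), V' t ∈ Set.Icc a b)
    (τ : ℝ) (hτ : τ ≤ 0) :
    |Real.exp (∫ s in τ..0, A (V s)) - Real.exp (∫ s in τ..0, A (V' s))| ≤
      Real.exp (ν * τ) * g₂ * ∫ s in τ..0, |V s - V' s| :=
  dms_transition_function_input_lipschitz_general A hA a b ν hAν g₂ hg₂ V V' hVm hV'm hV hV' τ hτ
end

section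
/- Let k01, k10 : ℝ → ℝ be nonnegative continuously differentiable functions, A = −(k01 + k10), let 𝒟 = [a,b] be compact with A(v) ≤ −ν < 0 on 𝒟, and set g₁ = max_{v ∈ 𝒟} |k01'(v)|. Let w : (−∞,0] → (0,1] be measurable with ∫_{−∞}^0 e^{ν τ}/w_τ dτ < ∞. Then for any measurable V, V' : (−∞,0] → 𝒟, the quantity H₂(V,V') = ∫_{−∞}^0 exp(∫_τ^0 A(V'_s) ds) · |k01(V_τ) − k01(V'_τ)| dτ satisfies H₂(V,V') ≤ g₁ · ( ∫_{−∞}^0 e^{ν τ}/w_τ dτ ) · ‖V − V'‖_w. -/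
/-! Along `V'` the rate `A` stays below `-ν`, so the propagator `exp (∫_τ^0 A(V'_s) ds)` is at
most `e^{ντ}`. The mean value theorem gives `|k01 V_τ - k01 V'_τ| ≤ g₁ |V_τ - V'_τ|`, and for
almost every `τ ≤ 0` the definition of the weighted norm gives `|V_τ - V'_τ| ≤ ‖V - V'‖_w / w_τ`.
Integrating the product of these bounds over `(-∞, 0]` gives the claim. -/

open MeasureTheory Set

theorem intervalIntegral_comp_le_mul_of_mapsTo {A V : ℝ → ℝ} {K : Set ℝ} {c s t : ℝ}
    (hK : IsCompact K) (hA : Continuous A) (hV : Measurable V) (hst : s ≤ t)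
    (hVK : ∀ x ∈ Icc s t, V x ∈ K) (hAc : ∀ v ∈ K, A v ≤ c) :
    ∫ x in s..t, A (V x) ≤ c * (t - s) := by
  obtain ⟨C, hC⟩ := hK.exists_bound_of_continuousOn hA.continuousOn
  have hint : IntervalIntegrable (fun x => A (V x)) volume s t := by
    rw [intervalIntegrable_iff_integrableOn_Ioc_of_le hst]
    refine Measure.integrableOn_of_bounded (M := C) measure_Ioc_lt_top.ne
      (hA.measurable.comp hV).aestronglyMeasurable ?_
    exact ae_restrict_of_forall_mem measurableSet_Ioc fun x hx =>
      hC _ (hVK x (Ioc_subset_Icc_self hx))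
  calc ∫ x in s..t, A (V x) ≤ ∫ _ in s..t, c :=
        intervalIntegral.integral_mono_on hst hint intervalIntegrable_const
          fun x hx => hAc _ (hVK x hx)
    _ = c * (t - s) := by rw [intervalIntegral.integral_const, smul_eq_mul, mul_comm]

section

variable {α : Type*} [MeasurableSpace α] {μ : Measure α} {s : Set α}

theorem ae_restrict_le_essSup_of_forall_le (hs : MeasurableSet s) {f : α → ℝ} {C : ℝ}
    (hC : ∀ x ∈ s, f x ≤ C) :
    ∀ᵐ x ∂μ.restrict s, x ∈ s ∧ f x ≤ essSup f (μ.restrict s) :=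
  (ae_restrict_mem hs).and <|
    ae_le_essSup (Filter.isBoundedUnder_of_eventually_le (ae_restrict_of_forall_mem hs hC))

theorem setIntegral_le_mul_setIntegral_of_ae_le {f g : α → ℝ} {c : ℝ}
    (hg : IntegrableOn g s μ) (hf : ∀ x, 0 ≤ f x) (hfg : ∀ᵐ x ∂μ.restrict s, f x ≤ c * g x) :
    ∫ x in s, f x ∂μ ≤ c * ∫ x in s, g x ∂μ := by
  rw [← integral_const_mul]
  exact integral_mono_of_nonneg (.of_forall hf) (hg.const_mul c) hfg

end

theorem dms_H2_bound_general
    (k01 k10 A : ℝ → ℝ)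
    (hk01 : ContDiff ℝ 1 k01) (hk10 : ContDiff ℝ 1 k10)
    (hA : ∀ v, A v = -(k01 v + k10 v))
    (a b ν : ℝ)
    (hAν : ∀ v ∈ Set.Icc a b, A v ≤ -ν)
    (g₁ : ℝ)
    (hg₁ : IsGreatest ((fun v => |deriv k01 v|) '' Set.Icc a b) g₁)
    (w : ℝ → ℝ)
    (hw : ∀ t ≤ (0 : ℝ), 0 < w t ∧ w t ≤ 1)
    (hwint : IntegrableOn (fun τ => Real.exp (ν * τ) / w τ) (Set.Iic 0))
    (V V' : ℝ → ℝ) (hV'm : Measurable V')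
    (hV : ∀ t ≤ (0 : ℝ), V t ∈ Set.Icc a b)
    (hV' : ∀ t ≤ (0 : ℝ), V' t ∈ Set.Icc a b) :
    (∫ τ in Set.Iic (0 : ℝ),
        Real.exp (∫ s in τ..0, A (V' s)) * |k01 (V τ) - k01 (V' τ)|) ≤
      g₁ * (∫ τ in Set.Iic (0 : ℝ), Real.exp (ν * τ) / w τ) *
        essSup (fun t => w t * |V t - V' t|) (volume.restrict (Set.Iic (0 : ℝ))) := by
  set M := essSup (fun t => w t * |V t - V' t|) (volume.restrict (Set.Iic (0 : ℝ)))
  have hg₁_nonneg : 0 ≤ g₁ := by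
    obtain ⟨_, _, rfl⟩ := hg₁.1
    exact abs_nonneg _
  have hAc : Continuous A := (continuous_congr hA).2 (hk01.continuous.add hk10.continuous).neg
  have hlip : ∀ x ∈ Icc a b, ∀ y ∈ Icc a b, |k01 x - k01 y| ≤ g₁ * |x - y| := fun x hx y hy =>
    (convex_Icc a b).norm_image_sub_le_of_norm_deriv_le
      (fun z _ => (hk01.differentiable one_ne_zero) z) (fun z hz => hg₁.2 ⟨z, hz, rfl⟩) hy hx
  have hdecay : ∀ τ ≤ 0, ∫ s in τ..0, A (V' s) ≤ ν * τ := fun τ hτ => by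
    have := intervalIntegral_comp_le_mul_of_mapsTo isCompact_Icc hAc hV'm hτ
      (fun s hs => hV' s hs.2) hAν
    linarith
  have hM : ∀ᵐ t ∂volume.restrict (Iic 0), t ∈ Iic 0 ∧ w t * |V t - V' t| ≤ M :=
    ae_restrict_le_essSup_of_forall_le measurableSet_Iic (C := b - a) fun t ht =>
      (mul_le_of_le_one_left (abs_nonneg _) (hw t ht).2).trans
        (Real.dist_le_of_mem_Icc (hV t ht) (hV' t ht))
  rw [mul_right_comm]
  refine setIntegral_le_mul_setIntegral_of_ae_le hwint (fun τ => by positivity)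
    (hM.mono fun τ ⟨hτ, hτM⟩ => ?_)
  have hΔ : |V τ - V' τ| ≤ M / w τ := (le_div_iff₀' (hw τ hτ).1).2 hτM
  calc Real.exp (∫ s in τ..0, A (V' s)) * |k01 (V τ) - k01 (V' τ)|
      ≤ Real.exp (ν * τ) * (g₁ * (M / w τ)) := by
        gcongr
        · exact hdecay τ hτ
        · exact (hlip _ (hV τ hτ) _ (hV' τ hτ)).trans (by gcongr)
    _ = g₁ * M * (Real.exp (ν * τ) / w τ) := by ring

/-- bound on the term `H₂` in the proof of Theorem 1: with
`A = −(k01 + k10)`, inputs valued in `𝒟 = [a,b]` where `A ≤ −ν < 0`,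
`g₁ = max_𝒟 |k01'|`, and a weighting function `w : (−∞,0] → (0,1]` with
`∫_{−∞}^0 e^{ντ}/w_τ dτ < ∞`, one has
`H₂(V,V') ≤ g₁·(∫_{−∞}^0 e^{ντ}/w_τ dτ)·‖V − V'‖_w`. -/
theorem dms_H2_bound
    (k01 k10 A : ℝ → ℝ)
    (hk01 : ContDiff ℝ 1 k01) (hk10 : ContDiff ℝ 1 k10)
    (hk01n : ∀ v, 0 ≤ k01 v) (hk10n : ∀ v, 0 ≤ k10 v)
    (hA : ∀ v, A v = -(k01 v + k10 v))
    (a b ν : ℝ) (hab : a ≤ b) (hν : 0 < ν)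
    (hAν : ∀ v ∈ Set.Icc a b, A v ≤ -ν)
    (g₁ : ℝ)
    (hg₁ : IsGreatest ((fun v => |deriv k01 v|) '' Set.Icc a b) g₁)
    (w : ℝ → ℝ) (hwm : Measurable w)
    (hw : ∀ t ≤ (0 : ℝ), 0 < w t ∧ w t ≤ 1)
    (hwint : IntegrableOn (fun τ => Real.exp (ν * τ) / w τ) (Set.Iic 0))
    (V V' : ℝ → ℝ) (hVm : Measurable V) (hV'm : Measurable V')
    (hV : ∀ t ≤ (0 : ℝ), V t ∈ Set.Icc a b)
    (hV' : ∀ t ≤ (0 : ℝ), V' t ∈ Set.Icc a b) :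
    (∫ τ in Set.Iic (0 : ℝ),
        Real.exp (∫ s in τ..0, A (V' s)) * |k01 (V τ) - k01 (V' τ)|) ≤
      g₁ * (∫ τ in Set.Iic (0 : ℝ), Real.exp (ν * τ) / w τ) *
        essSup (fun t => w t * |V t - V' t|) (volume.restrict (Set.Iic (0 : ℝ))) :=
  dms_H2_bound_general k01 k10 A hk01 hk10 hA a b ν hAν g₁ hg₁ w hw hwint V V' hV'm hV hV'
end

section
/- Let k01, k10 : ℝ → ℝ be nonnegative continuously differentiable functions, A = −(k01 + k10), let 𝒟 = [a,b] be compact with ν = min_{v ∈ 𝒟}(k01(v)+k10(v)) > 0, and set g₀ = max_{𝒟} k01, g₁ = max_{𝒟} |k01'|, g₂ = max_{𝒟} |A'|. Let w : (−∞,0] → (0,1] be measurable with w_t → 0 as t → −∞ and ∫_{−∞}^0 e^{ν τ}/w_τ dτ < ∞. Define the functional F on measurable signals V : (−∞,0] → 𝒟 by F(V) = ∫_{−∞}^0 exp(∫_τ^0 A(V_s) ds) · k01(V_τ) dτ. Then F is well defined and satisfies the Lipschitz bound |F(V) − F(V')| ≤ M · ‖V − V'‖_w with M = (g₁ + g₀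 g₂/ν) · ∫_{−∞}^0 e^{ν τ}/w_τ dτ; in particular F is continuous on the metric space of 𝒟-valued measurable signals on (−∞,0] equipped with the metric d(V,V') = ‖V − V'‖_w, i.e., F is a fading memory functional. -/
open MeasureTheory Set Real

/-! Since `A ≤ -ν` on `[a, b]`, the factor `exp (∫_τ^0 A(V_s) ds)` is at most `e^{ντ}`, so the
integrand of `F` is dominated by `g₀ e^{ντ}`. For two signals, splitting the difference of the
integrands and using that `exp` is `e^{ντ}`-Lipschitz on `(-∞, ντ]` bounds it by
`g₁ e^{ντ} |V_τ - V'_τ| + g₀ g₂ e^{ντ} ∫_τ^0 |V_s - V'_s| ds`; Fubini turns the integral of the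
second term into `ν⁻¹ ∫ e^{νs} |V_s - V'_s| ds`. Finally
`e^{νs} |V_s - V'_s| ≤ ‖V - V'‖_w e^{νs} / w_s` almost everywhere. -/

theorem abs_sub_le_mul_of_abs_deriv_le {f : ℝ → ℝ} (hf : Differentiable ℝ f) {s : Set ℝ}
    (hs : Convex ℝ s) {C : ℝ} (hC : ∀ x ∈ s, |deriv f x| ≤ C) {x y : ℝ} (hx : x ∈ s)
    (hy : y ∈ s) : |f x - f y| ≤ C * |x - y| := by
  simpa only [Real.norm_eq_abs] using
    hs.norm_image_sub_le_of_norm_deriv_le (fun z _ => hf z) (by simpa only [Real.norm_eq_abs]) hy hx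

theorem abs_sub_le_of_isGreatest_abs_deriv {f : ℝ → ℝ} (hf : Differentiable ℝ f) {a b g : ℝ}
    (hg : IsGreatest ((fun v => |deriv f v|) '' Icc a b) g) :
    ∀ u ∈ Icc a b, ∀ v ∈ Icc a b, |f u - f v| ≤ g * |u - v| := fun _ hu _ hv =>
  abs_sub_le_mul_of_abs_deriv_le hf (convex_Icc a b) (fun x hx => hg.2 ⟨x, hx, rfl⟩) hu hv

theorem abs_exp_sub_exp_le {x y c : ℝ} (hx : x ≤ c) (hy : y ≤ c) :
    |exp x - exp y| ≤ exp c * |x - y| :=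
  abs_sub_le_mul_of_abs_deriv_le differentiable_exp (convex_Iic c)
    (fun z hz => by rw [Real.deriv_exp, abs_of_pos (exp_pos z)]; exact exp_le_exp.2 hz) hx hy

theorem integral_mul_le_essSup_mul_integral_div {α : Type*} [MeasurableSpace α] {μ : Measure α}
    {φ w G : α → ℝ} (hφ : 0 ≤ᵐ[μ] φ) (hw : ∀ᵐ x ∂μ, 0 < w x)
    (hbdd : Filter.IsBoundedUnder (· ≤ ·) (ae μ) fun x => w x * G x)
    (hφG : Integrable (fun x => φ x * G x) μ) (hφw : Integrable (fun x => φ x / w x) μ) :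
    ∫ x, φ x * G x ∂μ ≤ essSup (fun x => w x * G x) μ * ∫ x, φ x / w x ∂μ := by
  rw [← integral_const_mul]
  refine integral_mono_ae hφG (hφw.const_mul _) ?_
  filter_upwards [hφ, hw, ae_le_essSup hbdd] with x hφx hwx hle
  calc φ x * G x = φ x / w x * (w x * G x) := by field_simp
    _ ≤ φ x / w x * essSup (fun x => w x * G x) μ := by
      gcongr
      exact div_nonneg hφx hwx.le
    _ = _ := mul_comm _ _

theorem intervalIntegral_le_mul_of_le_neg {r : ℝ → ℝ} {ν τ : ℝ} (hτ : τ ≤ 0)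
    (hr : IntervalIntegrable r volume τ 0) (hrν : ∀ s ∈ Icc τ 0, r s ≤ -ν) :
    ∫ s in τ..0, r s ≤ ν * τ := by
  have := intervalIntegral.integral_mono_on hτ hr intervalIntegrable_const hrν
  simp only [intervalIntegral.integral_const, smul_eq_mul] at this
  linarith

theorem intervalIntegrable_of_abs_le_of_le_zero {r : ℝ → ℝ} (hr : Measurable r) {C τ : ℝ}
    (hτ : τ ≤ 0) (hC : ∀ s ≤ 0, |r s| ≤ C) : IntervalIntegrable r volume τ 0 := by
  refine (intervalIntegrable_const (c := C)).mono_fun' hr.aestronglyMeasurable ?_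
  filter_upwards [ae_restrict_mem measurableSet_uIoc] with s hs
  rw [uIoc_of_le hτ] at hs
  exact hC s hs.2

theorem continuousOn_intervalIntegral_zero {r : ℝ → ℝ} (hr : Measurable r) {C : ℝ}
    (hC : ∀ s ≤ 0, |r s| ≤ C) : ContinuousOn (fun τ => ∫ s in τ..0, r s) (Iic 0) := by
  set r₀ := (Iic (0 : ℝ)).indicator r
  have hr₀ : ∀ x y, IntervalIntegrable r₀ volume x y := by
    refine fun x y => (intervalIntegrable_const (c := C)).mono_fun'
      (hr.indicator measurableSet_Iic).aestronglyMeasurable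
      (Filter.Eventually.of_forall fun s => ?_)
    by_cases hs : s ≤ 0
    · simpa [r₀, hs] using hC s hs
    · simpa [r₀, hs] using (abs_nonneg _).trans (hC 0 le_rfl)
  refine (intervalIntegral.continuous_primitive hr₀ 0).neg.continuousOn.congr fun τ hτ => ?_
  rw [Pi.neg_apply, ← intervalIntegral.integral_symm]
  refine intervalIntegral.integral_congr fun s hs => ?_
  rw [uIcc_of_le hτ] at hs
  simp [r₀, hs.2]

section ExpWeighted

variable {ν K : ℝ} {G : ℝ → ℝ}

theorem integrableOn_exp_mul_of_abs_le (hν : 0 < ν) (hG : Measurable G)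
    (hGK : ∀ s ≤ 0, |G s| ≤ K) : IntegrableOn (fun s => exp (ν * s) * G s) (Iic 0) := by
  refine ((integrableOn_exp_mul_Iic hν 0).mul_const K).mono'
    ((measurable_const.mul measurable_id).exp.mul hG).aestronglyMeasurable ?_
  filter_upwards [ae_restrict_mem measurableSet_Iic] with s hs
  rw [norm_mul, Real.norm_eq_abs, abs_of_pos (exp_pos _)]
  exact mul_le_mul_of_nonneg_left (hGK s hs) (exp_pos _).le

theorem integrable_exp_mul_ite_lt_prod (hν : 0 < ν) (hG : Measurable G)
    (hGK : ∀ s ≤ 0, |G s| ≤ K) :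
    Integrable (Function.uncurry fun τ s => if τ < s then exp (ν * τ) * G s else 0)
      ((volume.restrict (Iic (0 : ℝ))).prod (volume.restrict (Iic 0))) := by
  -- on `τ < s`, `e^{ντ} ≤ e^{ντ/2} e^{νs/2}`
  have hB : Integrable (fun p : ℝ × ℝ => K * (exp (ν / 2 * p.1) * exp (ν / 2 * p.2)))
      ((volume.restrict (Iic (0 : ℝ))).prod (volume.restrict (Iic 0))) :=
    ((integrableOn_exp_mul_Iic (half_pos hν) 0).mul_prod
      (integrableOn_exp_mul_Iic (half_pos hν) 0)).const_mul K
  refine hB.mono' ?_ ?_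
  · exact (Measurable.ite (measurableSet_lt measurable_fst measurable_snd)
      ((measurable_const.mul measurable_fst).exp.mul (hG.comp measurable_snd))
      measurable_const).aestronglyMeasurable
  rw [Measure.prod_restrict, ae_restrict_iff' (measurableSet_Iic.prod measurableSet_Iic)]
  refine Filter.Eventually.of_forall fun ⟨τ, s⟩ ⟨_, hs⟩ => ?_
  simp only [Function.uncurry_apply_pair]
  split_ifs with hτs
  · rw [norm_mul, Real.norm_eq_abs, abs_of_pos (exp_pos _), ← exp_add, mul_comm K]
    gcongr
    · nlinarith
    · exact hGK s hs
  · rw [norm_zero]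
    exact mul_nonneg ((abs_nonneg _).trans (hGK 0 le_rfl)) (by positivity)

theorem integral_Iic_ite_lt_fst (hν : 0 < ν) {s : ℝ} (hs : s ≤ 0) :
    ∫ τ in Iic 0, (if τ < s then exp (ν * τ) * G s else 0) = exp (ν * s) / ν * G s := by
  have : (fun τ => if τ < s then exp (ν * τ) * G s else 0) =
      (Iio s).indicator fun τ => exp (ν * τ) * G s := by
    ext τ; simp [indicator_apply]
  rw [this, integral_indicator measurableSet_Iio, Measure.restrict_restrict measurableSet_Iio,
    inter_eq_left.2 (Iio_subset_Iic_self.trans (Iic_subset_Iic.2 hs)),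
    ← integral_Iic_eq_integral_Iio, integral_mul_const, integral_exp_mul_Iic hν]

theorem integral_Iic_ite_lt_snd (τ : ℝ) :
    ∫ s in Iic 0, (if τ < s then exp (ν * τ) * G s else 0) = exp (ν * τ) * ∫ s in Ioc τ 0, G s := by
  have : (fun s => if τ < s then exp (ν * τ) * G s else 0) =
      (Ioi τ).indicator fun s => exp (ν * τ) * G s := by
    ext s; simp [indicator_apply]
  rw [this, integral_indicator measurableSet_Ioi, Measure.restrict_restrict measurableSet_Ioi,
    Ioi_inter_Iic, integral_const_mul]

theorem integrableOn_exp_mul_integral_Ioc (hν : 0 < ν) (hG : Measurable G)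
    (hGK : ∀ s ≤ 0, |G s| ≤ K) :
    IntegrableOn (fun τ => exp (ν * τ) * ∫ s in Ioc τ 0, G s) (Iic 0) := by
  simpa only [IntegrableOn, Function.uncurry_apply_pair, integral_Iic_ite_lt_snd] using
    (integrable_exp_mul_ite_lt_prod hν hG hGK).integral_prod_left

theorem integral_exp_mul_integral_Ioc (hν : 0 < ν) (hG : Measurable G)
    (hGK : ∀ s ≤ 0, |G s| ≤ K) :
    ∫ τ in Iic 0, exp (ν * τ) * ∫ s in Ioc τ 0, G s = ν⁻¹ * ∫ s in Iic 0, exp (ν * s) * G s := by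
  simp only [← integral_Iic_ite_lt_snd]
  rw [integral_integral_swap (integrable_exp_mul_ite_lt_prod hν hG hGK), ← integral_const_mul]
  refine setIntegral_congr_fun measurableSet_Iic fun s hs => ?_
  rw [integral_Iic_ite_lt_fst hν hs]
  field_simp

end ExpWeighted

namespace DMS

noncomputable def integrand (k A V : ℝ → ℝ) (τ : ℝ) : ℝ :=
  exp (∫ s in τ..0, A (V s)) * k (V τ)

variable {k A V V' : ℝ → ℝ} {a b ν : ℝ}

theorem exists_abs_comp_le (hA : Continuous A) (hV : ∀ t ≤ 0, V t ∈ Icc a b) :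
    ∃ C, ∀ t ≤ 0, |A (V t)| ≤ C := by
  obtain ⟨C, hC⟩ := isCompact_Icc.exists_bound_of_continuousOn hA.continuousOn
  exact ⟨C, fun t ht => hC _ (hV t ht)⟩

theorem intervalIntegrable_comp (hA : Continuous A) (hVm : Measurable V)
    (hV : ∀ t ≤ 0, V t ∈ Icc a b) {τ : ℝ} (hτ : τ ≤ 0) :
    IntervalIntegrable (fun s => A (V s)) volume τ 0 :=
  have ⟨_, hC⟩ := exists_abs_comp_le hA hV
  intervalIntegrable_of_abs_le_of_le_zero (hA.measurable.comp hVm) hτ hC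

theorem integral_comp_le_mul (hA : Continuous A) (hAν : ∀ v ∈ Icc a b, A v ≤ -ν)
    (hVm : Measurable V) (hV : ∀ t ≤ 0, V t ∈ Icc a b) {τ : ℝ} (hτ : τ ≤ 0) :
    ∫ s in τ..0, A (V s) ≤ ν * τ :=
  intervalIntegral_le_mul_of_le_neg hτ (intervalIntegrable_comp hA hVm hV hτ)
    fun s hs => hAν _ (hV s hs.2)

theorem integrableOn_integrand (hν : 0 < ν) (hk : Continuous k) (hA : Continuous A)
    (hAν : ∀ v ∈ Icc a b, A v ≤ -ν) (hVm : Measurable V) (hV : ∀ t ≤ 0, V t ∈ Icc a b) :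
    IntegrableOn (integrand k A V) (Iic 0) := by
  obtain ⟨CA, hCA⟩ := exists_abs_comp_le hA hV
  obtain ⟨Ck, hCk⟩ := exists_abs_comp_le hk hV
  have hmeas : AEStronglyMeasurable (integrand k A V) (volume.restrict (Iic 0)) :=
    ((continuousOn_intervalIntegral_zero (hA.measurable.comp hVm) hCA).rexp.aestronglyMeasurable
      measurableSet_Iic).mul (hk.measurable.comp hVm).aestronglyMeasurable
  refine ((integrableOn_exp_mul_Iic hν 0).const_mul Ck).mono' hmeas ?_
  filter_upwards [ae_restrict_mem measurableSet_Iic] with τ hτ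
  rw [integrand, norm_mul, Real.norm_eq_abs, Real.norm_eq_abs, abs_of_pos (exp_pos _),
    mul_comm Ck]
  exact mul_le_mul (exp_le_exp.2 (integral_comp_le_mul hA hAν hVm hV hτ)) (hCk τ hτ)
    (abs_nonneg _) (exp_pos _).le

theorem abs_sub_le_of_forall_mem_Icc (hV : ∀ t ≤ 0, V t ∈ Icc a b) (hV' : ∀ t ≤ 0, V' t ∈ Icc a b) :
    ∀ t ≤ 0, |V t - V' t| ≤ b - a := fun t ht => by
  simpa only [Real.dist_eq] using Real.dist_le_of_mem_Icc (hV t ht) (hV' t ht)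

theorem abs_integral_comp_sub_le (hA : Continuous A) {g₂ : ℝ}
    (hALip : ∀ u ∈ Icc a b, ∀ v ∈ Icc a b, |A u - A v| ≤ g₂ * |u - v|)
    (hVm : Measurable V) (hV'm : Measurable V') (hV : ∀ t ≤ 0, V t ∈ Icc a b)
    (hV' : ∀ t ≤ 0, V' t ∈ Icc a b) {τ : ℝ} (hτ : τ ≤ 0) :
    |(∫ s in τ..0, A (V s)) - ∫ s in τ..0, A (V' s)| ≤ g₂ * ∫ s in Ioc τ 0, |V s - V' s| := by
  have hAV := intervalIntegrable_comp hA hVm hV hτ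
  have hAV' := intervalIntegrable_comp hA hV'm hV' hτ
  have hdiff : IntervalIntegrable (fun s => |V s - V' s|) volume τ 0 :=
    intervalIntegrable_of_abs_le_of_le_zero (hVm.sub hV'm).abs hτ fun t ht =>
      (abs_abs _).trans_le (abs_sub_le_of_forall_mem_Icc hV hV' t ht)
  rw [← intervalIntegral.integral_sub hAV hAV', ← intervalIntegral.integral_of_le hτ,
    ← intervalIntegral.integral_const_mul]
  refine (intervalIntegral.abs_integral_le_integral_abs hτ).trans ?_
  exact intervalIntegral.integral_mono_on hτ (hAV.sub hAV').abs (hdiff.const_mul g₂)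
    fun s hs => hALip _ (hV s hs.2) _ (hV' s hs.2)

theorem abs_integrand_sub_le {g₀ g₁ g₂ : ℝ} (hk0 : ∀ v, 0 ≤ k v)
    (hkg₀ : ∀ v ∈ Icc a b, k v ≤ g₀)
    (hkLip : ∀ u ∈ Icc a b, ∀ v ∈ Icc a b, |k u - k v| ≤ g₁ * |u - v|)
    (hA : Continuous A) (hAν : ∀ v ∈ Icc a b, A v ≤ -ν)
    (hALip : ∀ u ∈ Icc a b, ∀ v ∈ Icc a b, |A u - A v| ≤ g₂ * |u - v|)
    (hVm : Measurable V) (hV'm : Measurable V') (hV : ∀ t ≤ 0, V t ∈ Icc a b)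
    (hV' : ∀ t ≤ 0, V' t ∈ Icc a b) {τ : ℝ} (hτ : τ ≤ 0) :
    |integrand k A V τ - integrand k A V' τ| ≤
      g₁ * (exp (ν * τ) * |V τ - V' τ|) +
        g₀ * g₂ * (exp (ν * τ) * ∫ s in Ioc τ 0, |V s - V' s|) := by
  unfold integrand
  set I := ∫ s in τ..0, A (V s)
  set I' := ∫ s in τ..0, A (V' s)
  have hI : I ≤ ν * τ := integral_comp_le_mul hA hAν hVm hV hτ
  have hI' : I' ≤ ν * τ := integral_comp_le_mul hA hAν hV'm hV' hτ
  have hk : exp I * |k (V τ) - k (V' τ)| ≤ exp (ν * τ) * (g₁ * |V τ - V' τ|) :=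
    mul_le_mul (exp_le_exp.2 hI) (hkLip _ (hV τ hτ) _ (hV' τ hτ)) (abs_nonneg _)
      (exp_pos _).le
  have hexp : k (V' τ) * |exp I - exp I'| ≤
      g₀ * (exp (ν * τ) * (g₂ * ∫ s in Ioc τ 0, |V s - V' s|)) := by
    refine mul_le_mul (hkg₀ _ (hV' τ hτ)) ?_ (abs_nonneg _) ((hk0 _).trans (hkg₀ _ (hV' τ hτ)))
    exact (abs_exp_sub_exp_le hI hI').trans (mul_le_mul_of_nonneg_left
      (abs_integral_comp_sub_le hA hALip hVm hV'm hV hV' hτ) (exp_pos _).le)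
  calc |exp I * k (V τ) - exp I' * k (V' τ)|
      = |exp I * (k (V τ) - k (V' τ)) + k (V' τ) * (exp I - exp I')| := by ring_nf
    _ ≤ exp I * |k (V τ) - k (V' τ)| + k (V' τ) * |exp I - exp I'| := by
        refine (abs_add_le _ _).trans_eq ?_
        rw [abs_mul, abs_mul, abs_of_pos (exp_pos _), abs_of_nonneg (hk0 _)]
    _ ≤ _ := by linarith

theorem abs_integral_integrand_sub_le (hν : 0 < ν) {g₀ g₁ g₂ : ℝ} (hk : Continuous k)
    (hk0 : ∀ v, 0 ≤ k v) (hkg₀ : ∀ v ∈ Icc a b, k v ≤ g₀)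
    (hkLip : ∀ u ∈ Icc a b, ∀ v ∈ Icc a b, |k u - k v| ≤ g₁ * |u - v|)
    (hA : Continuous A) (hAν : ∀ v ∈ Icc a b, A v ≤ -ν)
    (hALip : ∀ u ∈ Icc a b, ∀ v ∈ Icc a b, |A u - A v| ≤ g₂ * |u - v|)
    (hVm : Measurable V) (hV'm : Measurable V') (hV : ∀ t ≤ 0, V t ∈ Icc a b)
    (hV' : ∀ t ≤ 0, V' t ∈ Icc a b) :
    |(∫ τ in Iic 0, integrand k A V τ) - ∫ τ in Iic 0, integrand k A V' τ| ≤
      (g₁ + g₀ * g₂ / ν) * ∫ s in Iic 0, exp (ν * s) * |V s - V' s| := by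
  have hGm : Measurable fun s => |V s - V' s| := (hVm.sub hV'm).abs
  have hGK : ∀ s ≤ 0, |(fun s => |V s - V' s|) s| ≤ b - a := fun s hs =>
    (abs_abs _).trans_le (abs_sub_le_of_forall_mem_Icc hV hV' s hs)
  have hF := integrableOn_integrand hν hk hA hAν hVm hV
  have hF' := integrableOn_integrand hν hk hA hAν hV'm hV'
  have h₁ := (integrableOn_exp_mul_of_abs_le hν hGm hGK).const_mul g₁
  have h₂ := (integrableOn_exp_mul_integral_Ioc hν hGm hGK).const_mul (g₀ * g₂)
  rw [← integral_sub hF hF']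
  calc |∫ τ in Iic 0, (integrand k A V τ - integrand k A V' τ)|
      ≤ ∫ τ in Iic 0, |integrand k A V τ - integrand k A V' τ| :=
        abs_integral_le_integral_abs
    _ ≤ ∫ τ in Iic 0, (g₁ * (exp (ν * τ) * |V τ - V' τ|) +
          g₀ * g₂ * (exp (ν * τ) * ∫ s in Ioc τ 0, |V s - V' s|)) :=
        setIntegral_mono_on (hF.sub hF').abs (h₁.add h₂) measurableSet_Iic fun τ hτ =>
          abs_integrand_sub_le hk0 hkg₀ hkLip hA hAν hALip hVm hV'm hV hV' hτ
    _ = _ := by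
        rw [integral_add h₁ h₂, integral_const_mul, integral_const_mul,
          integral_exp_mul_integral_Ioc hν hGm hGK]
        field_simp

theorem integral_exp_mul_abs_sub_le_essSup (hν : 0 < ν) {w : ℝ → ℝ}
    (hw : ∀ t ≤ 0, 0 < w t ∧ w t ≤ 1)
    (hwint : IntegrableOn (fun τ => exp (ν * τ) / w τ) (Iic 0)) (hVm : Measurable V)
    (hV'm : Measurable V') (hV : ∀ t ≤ 0, V t ∈ Icc a b) (hV' : ∀ t ≤ 0, V' t ∈ Icc a b) :
    ∫ s in Iic 0, exp (ν * s) * |V s - V' s| ≤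
      essSup (fun t => w t * |V t - V' t|) (volume.restrict (Iic 0)) *
        ∫ τ in Iic 0, exp (ν * τ) / w τ := by
  have hGK : ∀ s ≤ 0, |(fun s => |V s - V' s|) s| ≤ b - a := fun s hs =>
    (abs_abs _).trans_le (abs_sub_le_of_forall_mem_Icc hV hV' s hs)
  refine integral_mul_le_essSup_mul_integral_div
    (Filter.Eventually.of_forall fun _ => (exp_pos _).le) ?_ ?_
    (integrableOn_exp_mul_of_abs_le hν (hVm.sub hV'm).abs hGK) hwint
  · filter_upwards [ae_restrict_mem measurableSet_Iic] with t ht using (hw t ht).1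
  · refine Filter.isBoundedUnder_of_eventually_le (a := b - a) ?_
    filter_upwards [ae_restrict_mem measurableSet_Iic] with t ht
    exact (mul_le_of_le_one_left (abs_nonneg _) (hw t ht).2).trans
      (abs_sub_le_of_forall_mem_Icc hV hV' t ht)

end DMS

theorem dms_fading_memory_functional_general
    (k01 k10 A : ℝ → ℝ)
    (hk01 : ContDiff ℝ 1 k01) (hk10 : ContDiff ℝ 1 k10)
    (hk01n : ∀ v, 0 ≤ k01 v)
    (hA : ∀ v, A v = -(k01 v + k10 v))
    (a b ν : ℝ)
    (hν : IsLeast ((fun v => k01 v + k10 v) '' Set.Icc a b) ν) (hν0 : 0 < ν)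
    (g₀ g₁ g₂ : ℝ)
    (hg₀ : IsGreatest (k01 '' Set.Icc a b) g₀)
    (hg₁ : IsGreatest ((fun v => |deriv k01 v|) '' Set.Icc a b) g₁)
    (hg₂ : IsGreatest ((fun v => |deriv A v|) '' Set.Icc a b) g₂)
    (w : ℝ → ℝ)
    (hw : ∀ t ≤ (0 : ℝ), 0 < w t ∧ w t ≤ 1)
    (hwint : IntegrableOn (fun τ => Real.exp (ν * τ) / w τ) (Set.Iic 0))
    (M : ℝ)
    (hM : M = (g₁ + g₀ * g₂ / ν) * ∫ τ in Set.Iic (0 : ℝ), Real.exp (ν * τ) / w τ)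
    (F : (ℝ → ℝ) → ℝ)
    (hF : ∀ V : ℝ → ℝ,
      F V = ∫ τ in Set.Iic (0 : ℝ), Real.exp (∫ s in τ..0, A (V s)) * k01 (V τ)) :
    (∀ V : ℝ → ℝ, Measurable V → (∀ t ≤ (0 : ℝ), V t ∈ Set.Icc a b) →
      IntegrableOn (fun τ => Real.exp (∫ s in τ..0, A (V s)) * k01 (V τ))
        (Set.Iic 0)) ∧
    (∀ V V' : ℝ → ℝ, Measurable V → Measurable V' →
      (∀ t ≤ (0 : ℝ), V t ∈ Set.Icc a b) → (∀ t ≤ (0 : ℝ), V' t ∈ Set.Icc a b) →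
      |F V - F V'| ≤ M *
        essSup (fun t => w t * |V t - V' t|) (volume.restrict (Set.Iic (0 : ℝ)))) ∧
    (∀ ε > (0 : ℝ), ∃ δ > (0 : ℝ), ∀ V V' : ℝ → ℝ, Measurable V → Measurable V' →
      (∀ t ≤ (0 : ℝ), V t ∈ Set.Icc a b) → (∀ t ≤ (0 : ℝ), V' t ∈ Set.Icc a b) →
      essSup (fun t => w t * |V t - V' t|) (volume.restrict (Set.Iic (0 : ℝ))) < δ →
      |F V - F V'| < ε) := by
  have hAc : ContDiff ℝ 1 A := by
    rw [show A = fun v => -(k01 v + k10 v) from funext hA]; exact (hk01.add hk10).neg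
  have hAν : ∀ v ∈ Icc a b, A v ≤ -ν := fun v hv => by
    rw [hA]; linarith [hν.2 ⟨v, hv, rfl⟩]
  have hkg₀ : ∀ v ∈ Icc a b, k01 v ≤ g₀ := fun v hv => hg₀.2 ⟨v, hv, rfl⟩
  have hkLip := abs_sub_le_of_isGreatest_abs_deriv (hk01.differentiable one_ne_zero) hg₁
  have hALip := abs_sub_le_of_isGreatest_abs_deriv (hAc.differentiable one_ne_zero) hg₂
  have hcoef : 0 ≤ g₁ + g₀ * g₂ / ν := by
    obtain ⟨v₀, -, h₀⟩ := hg₀.1; obtain ⟨v₁, -, h₁⟩ := hg₁.1; obtain ⟨v₂, -, h₂⟩ := hg₂.1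
    exact add_nonneg (h₁ ▸ abs_nonneg _)
      (div_nonneg (mul_nonneg (h₀ ▸ hk01n v₀) (h₂ ▸ abs_nonneg _)) hν0.le)
  have hM0 : 0 ≤ M := hM ▸ mul_nonneg hcoef
    (setIntegral_nonneg measurableSet_Iic fun τ hτ => div_nonneg (exp_pos _).le (hw τ hτ).1.le)
  have hLip : ∀ V V' : ℝ → ℝ, Measurable V → Measurable V' →
      (∀ t ≤ (0 : ℝ), V t ∈ Icc a b) → (∀ t ≤ (0 : ℝ), V' t ∈ Icc a b) →
      |F V - F V'| ≤ M * essSup (fun t => w t * |V t - V' t|) (volume.restrict (Iic 0)) := by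
    intro V V' hVm hV'm hV hV'
    rw [hF, hF, hM, mul_right_comm, mul_assoc]
    exact (DMS.abs_integral_integrand_sub_le hν0 hk01.continuous hk01n hkg₀ hkLip hAc.continuous
      hAν hALip hVm hV'm hV hV').trans (mul_le_mul_of_nonneg_left
        (DMS.integral_exp_mul_abs_sub_le_essSup hν0 hw hwint hVm hV'm hV hV') hcoef)
  refine ⟨fun V hVm hV => DMS.integrableOn_integrand hν0 hk01.continuous hAc.continuous hAν hVm hV,
    hLip, fun ε hε => ⟨ε / (M + 1), div_pos hε (by linarith), ?_⟩⟩
  intro V V' hVm hV'm hV hV' hδ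
  calc |F V - F V'| ≤ M * (ε / (M + 1)) := (hLip V V' hVm hV'm hV hV').trans (by gcongr)
    _ < ε := by rw [← mul_div_assoc, div_lt_iff₀ (by linarith)]; linarith

/-- fading memory property, Theorem 1: the functional
`F(V) = ∫_{−∞}^0 exp(∫_τ^0 A(V_s) ds)·k01(V_τ) dτ` induced by the DMS dynamics
is well defined on measurable `𝒟`-valued signals on `(−∞,0]`, satisfies the
Lipschitz bound `|F(V) − F(V')| ≤ M·‖V − V'‖_w` with
`M = (g₁ + g₀g₂/ν)·∫_{−∞}^0 e^{ντ}/w_τ dτ`, and in particular is continuous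
with respect to the weighted norm `‖V‖_w = ess sup_{t ≤ 0} w_t |V_t|`, i.e., it
is a fading memory functional. -/
theorem dms_fading_memory_functional
    (k01 k10 A : ℝ → ℝ)
    (hk01 : ContDiff ℝ 1 k01) (hk10 : ContDiff ℝ 1 k10)
    (hk01n : ∀ v, 0 ≤ k01 v) (hk10n : ∀ v, 0 ≤ k10 v)
    (hA : ∀ v, A v = -(k01 v + k10 v))
    (a b ν : ℝ) (hab : a ≤ b)
    (hν : IsLeast ((fun v => k01 v + k10 v) '' Set.Icc a b) ν) (hν0 : 0 < ν)
    (g₀ g₁ g₂ : ℝ)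
    (hg₀ : IsGreatest (k01 '' Set.Icc a b) g₀)
    (hg₁ : IsGreatest ((fun v => |deriv k01 v|) '' Set.Icc a b) g₁)
    (hg₂ : IsGreatest ((fun v => |deriv A v|) '' Set.Icc a b) g₂)
    (w : ℝ → ℝ) (hwm : Measurable w)
    (hw : ∀ t ≤ (0 : ℝ), 0 < w t ∧ w t ≤ 1)
    (hw0 : Filter.Tendsto w Filter.atBot (nhds 0))
    (hwint : IntegrableOn (fun τ => Real.exp (ν * τ) / w τ) (Set.Iic 0))
    (M : ℝ)
    (hM : M = (g₁ + g₀ * g₂ / ν) * ∫ τ in Set.Iic (0 : ℝ), Real.exp (ν * τ) / w τ)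
    (F : (ℝ → ℝ) → ℝ)
    (hF : ∀ V : ℝ → ℝ,
      F V = ∫ τ in Set.Iic (0 : ℝ), Real.exp (∫ s in τ..0, A (V s)) * k01 (V τ)) :
    (∀ V : ℝ → ℝ, Measurable V → (∀ t ≤ (0 : ℝ), V t ∈ Set.Icc a b) →
      IntegrableOn (fun τ => Real.exp (∫ s in τ..0, A (V s)) * k01 (V τ))
        (Set.Iic 0)) ∧
    (∀ V V' : ℝ → ℝ, Measurable V → Measurable V' →
      (∀ t ≤ (0 : ℝ), V t ∈ Set.Icc a b) → (∀ t ≤ (0 : ℝ), V' t ∈ Set.Icc a b) →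
      |F V - F V'| ≤ M *
        essSup (fun t => w t * |V t - V' t|) (volume.restrict (Set.Iic (0 : ℝ)))) ∧
    (∀ ε > (0 : ℝ), ∃ δ > (0 : ℝ), ∀ V V' : ℝ → ℝ, Measurable V → Measurable V' →
      (∀ t ≤ (0 : ℝ), V t ∈ Set.Icc a b) → (∀ t ≤ (0 : ℝ), V' t ∈ Set.Icc a b) →
      essSup (fun t => w t * |V t - V' t|) (volume.restrict (Set.Iic (0 : ℝ))) < δ →
      |F V - F V'| < ε) :=
  dms_fading_memory_functional_general k01 k10 A hk01 hk10 hk01n hA a b ν hν hν0 g₀ g₁ g₂ hg₀ hg₁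
    hg₂ w hw hwint M hM F hF
end

section
/- Let A : ℝ → ℝ and G : ℝ → ℝ, let 𝒟 = [a,b] be a compact interval with A(v) ≤ −ν < 0 for all v ∈ 𝒟, fix T_s > 0, and let Ṽ : ℤ → 𝒟 be any input sequence. If P̃¹ and P̃² are two solutions of the recursion P̃_{k+1} = e^{A(Ṽ_k) T_s}·P̃_k + G(Ṽ_k) started at time k₀ with arbitrary initial values, then for all k ≥ k₀, |P̃¹_k − P̃²_k| ≤ e^{−ν T_s (k − k₀)} · |P̃¹_{k₀} − P̃²_{k₀}|; in particular the bound is given by the 𝒦ℒ-function β(x, m) = x·e^{−ν T_s m}, uniformly over all 𝒟-valued input sequences. -/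
/-- convergence/echo-state property, Theorem 2: two solutions
of the discrete-time DMS recursion `P̃_{k+1} = e^{A(Ṽ_k)T_s}·P̃_k + G(Ṽ_k)`
driven by the same `𝒟 = [a,b]`-valued input sequence, where `A ≤ −ν < 0` on
`𝒟`, contract at the uniform exponential rate given by the 𝒦ℒ-function
`β(x,m) = x·e^{−νT_s m}`. -/
theorem dms_discrete_exponential_contraction
    (A G : ℝ → ℝ) (a b ν Ts : ℝ) (hab : a ≤ b) (hν : 0 < ν) (hTs : 0 < Ts)
    (hAν : ∀ v ∈ Set.Icc a b, A v ≤ -ν)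
    (Vt : ℤ → ℝ) (hVt : ∀ k : ℤ, Vt k ∈ Set.Icc a b)
    (k₀ : ℤ) (P₁ P₂ : ℤ → ℝ)
    (hP₁ : ∀ k : ℤ, k₀ ≤ k → P₁ (k + 1) = Real.exp (A (Vt k) * Ts) * P₁ k + G (Vt k))
    (hP₂ : ∀ k : ℤ, k₀ ≤ k → P₂ (k + 1) = Real.exp (A (Vt k) * Ts) * P₂ k + G (Vt k)) :
    ∀ k : ℤ, k₀ ≤ k →
      |P₁ k - P₂ k| ≤
        Real.exp (-ν * Ts * ((k : ℝ) - (k₀ : ℝ))) * |P₁ k₀ - P₂ k₀| := by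
  have main : ∀ n : ℕ, |P₁ (k₀ + n) - P₂ (k₀ + n)| ≤
      Real.exp (-ν * Ts * n) * |P₁ k₀ - P₂ k₀| := by
    intro n
    induction n with
    | zero => simp
    | succ n ih =>
      have hn : k₀ ≤ k₀ + n := by omega
      have hrec : P₁ (k₀ + n + 1) - P₂ (k₀ + n + 1)
          = Real.exp (A (Vt (k₀ + n)) * Ts) * (P₁ (k₀ + n) - P₂ (k₀ + n)) := by
        rw [hP₁ _ hn, hP₂ _ hn]; ring
      have hA : A (Vt (k₀ + n)) ≤ -ν := hAν _ (hVt _)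
      have hexp : Real.exp (A (Vt (k₀ + n)) * Ts) ≤ Real.exp (-ν * Ts) :=
        Real.exp_le_exp.mpr (mul_le_mul_of_nonneg_right hA hTs.le)
      have : (k₀ + (n + 1 : ℕ) : ℤ) = k₀ + n + 1 := by push_cast; ring
      rw [this]
      calc |P₁ (k₀ + n + 1) - P₂ (k₀ + n + 1)|
          = Real.exp (A (Vt (k₀ + n)) * Ts) * |P₁ (k₀ + n) - P₂ (k₀ + n)| := by
            rw [hrec, abs_mul, abs_of_pos (Real.exp_pos _)]
        _ ≤ Real.exp (-ν * Ts) * (Real.exp (-ν * Ts * n) * |P₁ k₀ - P₂ k₀|) :=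
            mul_le_mul hexp ih (abs_nonneg _) (Real.exp_pos _).le
        _ = Real.exp (-ν * Ts * ((n : ℕ) + 1 : ℕ)) * |P₁ k₀ - P₂ k₀| := by
            rw [← mul_assoc, ← Real.exp_add]; push_cast; ring_nf
  intro k hk
  obtain ⟨n, rfl⟩ := Int.le.dest hk
  have := main n
  convert this using 3
  push_cast; ring
end

section
/- Let A, G : ℝ → ℝ be continuous, let 𝒟 = [a,b] be compact with A(v) ≤ −ν < 0 on 𝒟, fix T_s > 0, and let Ṽ : ℤ → 𝒟. Then for every k ∈ ℤ the series P̄_k = Σ_{m=−∞}^{0} ( Π_{l=m}^{−1} e^{A(Ṽ_{k+l}) T_s} ) · G(Ṽ_{k+m−1}) (with the empty product for m = 0 equal to 1) converges absolutely, the sequence (P̄_k)_{k∈ℤ} is bounded, it satisfies the recursion P̄_{k+1} = e^{A(Ṽ_k) T_s}·P̄_k + G(Ṽ_k) for all k ∈ ℤ, and it is the unique bounded solution of this recursion on all of ℤ; moreover every solution started at any initial value at time k₀ converges to P̄_k as k₀ → −∞. -/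
/-!
The recursion `x (k + 1) = c k * x k + g k` has transition factors `|c k| ≤ r < 1`, so two
solutions started at the same time approach each other geometrically. Unrolling the recursion
infinitely far into the past gives the pullback series, dominated by `M * r ^ n`; it solves the
recursion on all of `ℤ`, and contraction makes every bounded entire solution, and the limit of
every solution started further and further in the past, equal to it.
-/

open Filter Topology

/-- `c (k - 1) * ⋯ * c (k - n)`: the factor by which the recursion carries a state from time
`k - n` to time `k`. -/
def transitionProd (c : ℤ → ℝ) (k : ℤ) (n : ℕ) : ℝ :=
  ∏ j ∈ Finset.range n, c (k - 1 - j)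

def pullbackTerm (c g : ℤ → ℝ) (k : ℤ) (n : ℕ) : ℝ :=
  transitionProd c k n * g (k - 1 - n)

section AffineRecursion

variable {c g : ℤ → ℝ} {r M : ℝ}

theorem transitionProd_succ (c : ℤ → ℝ) (k : ℤ) (n : ℕ) :
    transitionProd c (k + 1) (n + 1) = c k * transitionProd c k n := by
  rw [transitionProd, transitionProd, Finset.prod_range_succ', mul_comm]
  congr 1
  · simp
  · refine Finset.prod_congr rfl fun j _ => ?_
    push_cast
    ring_nf

theorem pullbackTerm_zero (c g : ℤ → ℝ) (k : ℤ) : pullbackTerm c g (k + 1) 0 = g k := by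
  simp [pullbackTerm, transitionProd]

theorem pullbackTerm_succ (c g : ℤ → ℝ) (k : ℤ) (n : ℕ) :
    pullbackTerm c g (k + 1) (n + 1) = c k * pullbackTerm c g k n := by
  rw [pullbackTerm, pullbackTerm, transitionProd_succ, mul_assoc]
  congr 3
  push_cast
  ring

theorem abs_transitionProd_le (hc : ∀ k, |c k| ≤ r) (k : ℤ) (n : ℕ) :
    |transitionProd c k n| ≤ r ^ n := by
  rw [transitionProd, Finset.abs_prod]
  calc ∏ j ∈ Finset.range n, |c (k - 1 - j)| ≤ ∏ _j ∈ Finset.range n, r :=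
        Finset.prod_le_prod (fun _ _ => abs_nonneg _) fun _ _ => hc _
    _ = r ^ n := by rw [Finset.prod_const, Finset.card_range]

theorem abs_pullbackTerm_le (hc : ∀ k, |c k| ≤ r) (hg : ∀ k, |g k| ≤ M) (k : ℤ) (n : ℕ) :
    |pullbackTerm c g k n| ≤ M * r ^ n := by
  have hr : 0 ≤ r := (abs_nonneg _).trans (hc 0)
  rw [pullbackTerm, abs_mul, mul_comm M]
  exact mul_le_mul (abs_transitionProd_le hc k n) (hg _) (abs_nonneg _) (pow_nonneg hr n)

theorem summable_abs_pullbackTerm (hc : ∀ k, |c k| ≤ r) (hr : r < 1) (hg : ∀ k, |g k| ≤ M)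
    (k : ℤ) : Summable fun n => |pullbackTerm c g k n| :=
  .of_nonneg_of_le (fun _ => abs_nonneg _) (abs_pullbackTerm_le hc hg k)
    ((summable_geometric_of_lt_one ((abs_nonneg _).trans (hc 0)) hr).mul_left M)

theorem abs_tsum_pullbackTerm_le (hc : ∀ k, |c k| ≤ r) (hr : r < 1) (hg : ∀ k, |g k| ≤ M)
    (k : ℤ) : |∑' n, pullbackTerm c g k n| ≤ M / (1 - r) := by
  have hr0 : 0 ≤ r := (abs_nonneg _).trans (hc 0)
  calc |∑' n, pullbackTerm c g k n| ≤ ∑' n, |pullbackTerm c g k n| := by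
        simpa only [Real.norm_eq_abs] using
          norm_tsum_le_tsum_norm (f := pullbackTerm c g k) (summable_abs_pullbackTerm hc hr hg k)
    _ ≤ ∑' n : ℕ, M * r ^ n :=
        (summable_abs_pullbackTerm hc hr hg k).tsum_le_tsum (abs_pullbackTerm_le hc hg k)
          ((summable_geometric_of_lt_one hr0 hr).mul_left M)
    _ = M / (1 - r) := by rw [tsum_mul_left, tsum_geometric_of_lt_one hr0 hr, div_eq_mul_inv]

theorem tsum_pullbackTerm_add_one (hc : ∀ k, |c k| ≤ r) (hr : r < 1) (hg : ∀ k, |g k| ≤ M)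
    (k : ℤ) :
    ∑' n, pullbackTerm c g (k + 1) n = c k * ∑' n, pullbackTerm c g k n + g k := by
  rw [(summable_abs_pullbackTerm hc hr hg (k + 1)).of_abs.tsum_eq_zero_add, pullbackTerm_zero,
    add_comm, ← tsum_mul_left]
  simp only [pullbackTerm_succ]

theorem abs_sub_le_pow_of_recursion (hc : ∀ k, |c k| ≤ r) {x y : ℤ → ℝ} {k₀ : ℤ}
    (hx : ∀ k, k₀ ≤ k → x (k + 1) = c k * x k + g k)
    (hy : ∀ k, k₀ ≤ k → y (k + 1) = c k * y k + g k) (n : ℕ) :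
    |x (k₀ + n) - y (k₀ + n)| ≤ r ^ n * |x k₀ - y k₀| := by
  induction n with
  | zero => simp
  | succ n ih =>
    have hk : k₀ ≤ k₀ + n := by omega
    calc |x (k₀ + ↑(n + 1)) - y (k₀ + ↑(n + 1))|
        = |c (k₀ + n)| * |x (k₀ + n) - y (k₀ + n)| := by
          rw [Nat.cast_succ, ← add_assoc, hx _ hk, hy _ hk, ← abs_mul]
          ring_nf
      _ ≤ r * (r ^ n * |x k₀ - y k₀|) :=
          mul_le_mul (hc _) ih (abs_nonneg _) ((abs_nonneg _).trans (hc 0))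
      _ = r ^ (n + 1) * |x k₀ - y k₀| := by ring

theorem tendsto_atBot_of_recursion (hc : ∀ k, |c k| ≤ r) (hr : r < 1) {x : ℤ → ℤ → ℝ}
    {y : ℤ → ℝ} {B : ℝ} (hx : ∀ k₀ k, k₀ ≤ k → x k₀ (k + 1) = c k * x k₀ k + g k)
    (hy : ∀ k, y (k + 1) = c k * y k + g k) (hB : ∀ k₀, |x k₀ k₀ - y k₀| ≤ B) (k : ℤ) :
    Tendsto (fun k₀ => x k₀ k) atBot (𝓝 (y k)) := by
  have hr0 : 0 ≤ r := (abs_nonneg _).trans (hc 0)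
  have hdist : ∀ k₀ ≤ k, |x k₀ k - y k| ≤ r ^ (k - k₀).toNat * B := by
    intro k₀ hk₀
    have hk : k₀ + ((k - k₀).toNat : ℤ) = k := by omega
    calc |x k₀ k - y k| ≤ r ^ (k - k₀).toNat * |x k₀ k₀ - y k₀| := by
          simpa only [hk] using
            abs_sub_le_pow_of_recursion hc (hx k₀) (fun k _ => hy k) (k - k₀).toNat
      _ ≤ r ^ (k - k₀).toNat * B := mul_le_mul_of_nonneg_left (hB k₀) (pow_nonneg hr0 _)
  have hgap : Tendsto (fun k₀ : ℤ => (k - k₀).toNat) atBot atTop :=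
    tendsto_atTop.2 fun N => eventually_atBot.2 ⟨k - N, fun k₀ hk₀ => by omega⟩
  have hbound : Tendsto (fun k₀ : ℤ => r ^ (k - k₀).toNat * B) atBot (𝓝 0) := by
    simpa using ((tendsto_pow_atTop_nhds_zero_of_lt_one hr0 hr).comp hgap).mul_const B
  refine tendsto_sub_nhds_zero_iff.1 (squeeze_zero_norm' ?_ hbound)
  exact eventually_atBot.2 ⟨k, hdist⟩

end AffineRecursion

theorem dms_discrete_unique_bounded_entire_solution_general
    (A G : ℝ → ℝ) (hGc : Continuous G)
    (a b ν Ts : ℝ) (hν : 0 < ν) (hTs : 0 < Ts)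
    (hAν : ∀ v ∈ Set.Icc a b, A v ≤ -ν)
    (Vt : ℤ → ℝ) (hVt : ∀ k : ℤ, Vt k ∈ Set.Icc a b)
    (Pbar : ℤ → ℝ)
    (hPbar : ∀ k : ℤ, Pbar k = ∑' n : ℕ,
      (∏ j ∈ Finset.range n, Real.exp (A (Vt (k - 1 - (j : ℤ))) * Ts)) *
        G (Vt (k - 1 - (n : ℤ)))) :
    (∀ k : ℤ, Summable (fun n : ℕ =>
      |(∏ j ∈ Finset.range n, Real.exp (A (Vt (k - 1 - (j : ℤ))) * Ts)) *
        G (Vt (k - 1 - (n : ℤ)))|)) ∧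
    (∃ C : ℝ, ∀ k : ℤ, |Pbar k| ≤ C) ∧
    (∀ k : ℤ, Pbar (k + 1) = Real.exp (A (Vt k) * Ts) * Pbar k + G (Vt k)) ∧
    (∀ Q : ℤ → ℝ,
      (∀ k : ℤ, Q (k + 1) = Real.exp (A (Vt k) * Ts) * Q k + G (Vt k)) →
      (∃ C : ℝ, ∀ k : ℤ, |Q k| ≤ C) → Q = Pbar) ∧
    (∀ (p : ℝ) (Q : ℤ → ℤ → ℝ),
      (∀ k₀ : ℤ, Q k₀ k₀ = p) →
      (∀ k₀ k : ℤ, k₀ ≤ k →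
        Q k₀ (k + 1) = Real.exp (A (Vt k) * Ts) * Q k₀ k + G (Vt k)) →
      ∀ k : ℤ, Filter.Tendsto (fun k₀ => Q k₀ k) Filter.atBot (nhds (Pbar k))) := by
  set c : ℤ → ℝ := fun k => Real.exp (A (Vt k) * Ts)
  set g : ℤ → ℝ := fun k => G (Vt k)
  obtain rfl : Pbar = fun k => ∑' n, pullbackTerm c g k n := funext hPbar
  have hr : Real.exp (-ν * Ts) < 1 := Real.exp_lt_one_iff.2 (by nlinarith)
  have hc : ∀ k, |c k| ≤ Real.exp (-ν * Ts) := fun k => by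
    rw [abs_of_pos (Real.exp_pos _)]
    exact Real.exp_le_exp.2 (mul_le_mul_of_nonneg_right (hAν _ (hVt k)) hTs.le)
  obtain ⟨M, hM⟩ := isCompact_Icc.exists_bound_of_continuousOn hGc.continuousOn
  have hg : ∀ k, |g k| ≤ M := fun k => hM _ (hVt k)
  have hrec := tsum_pullbackTerm_add_one hc hr hg
  have hbdd := abs_tsum_pullbackTerm_le hc hr hg
  refine ⟨fun k => summable_abs_pullbackTerm hc hr hg k, ⟨_, hbdd⟩, hrec, ?_, ?_⟩
  · rintro Q hQ ⟨C, hC⟩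
    funext k
    -- `Q` restarted at every time `k₀` is a constant family, whose limit is `Q k` itself.
    exact tendsto_nhds_unique tendsto_const_nhds
      (tendsto_atBot_of_recursion (x := fun _ => Q) hc hr (fun _ k _ => hQ k) hrec
        (fun k₀ => (abs_sub _ _).trans (add_le_add (hC k₀) (hbdd k₀))) k)
  · intro p Q hQ₀ hQ
    exact tendsto_atBot_of_recursion hc hr hQ hrec
      fun k₀ => by rw [hQ₀]; exact (abs_sub _ _).trans (add_le_add le_rfl (hbdd k₀))

/-- unique bounded entire solution, proof of Theorem 2: for
the discrete-time DMS recursion `P̃_{k+1} = e^{A(Ṽ_k)T_s}·P̃_k + G(Ṽ_k)` with a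
`𝒟 = [a,b]`-valued input sequence and `A ≤ −ν < 0` on `𝒟`, the series
`P̄_k = Σ_{m=−∞}^0 (Π_{l=m}^{−1} e^{A(Ṽ_{k+l})T_s})·G(Ṽ_{k+m−1})` (written below
with `m = −n`, `n ∈ ℕ`) converges absolutely, is bounded on `ℤ`, satisfies the
recursion on all of `ℤ`, is the unique bounded entire solution, and every
solution started at any value `p` at time `k₀` converges to `P̄_k` as
`k₀ → −∞`. -/
theorem dms_discrete_unique_bounded_entire_solution
    (A G : ℝ → ℝ) (hAc : Continuous A) (hGc : Continuous G)
    (a b ν Ts : ℝ) (hab : a ≤ b) (hν : 0 < ν) (hTs : 0 < Ts)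
    (hAν : ∀ v ∈ Set.Icc a b, A v ≤ -ν)
    (Vt : ℤ → ℝ) (hVt : ∀ k : ℤ, Vt k ∈ Set.Icc a b)
    (Pbar : ℤ → ℝ)
    (hPbar : ∀ k : ℤ, Pbar k = ∑' n : ℕ,
      (∏ j ∈ Finset.range n, Real.exp (A (Vt (k - 1 - (j : ℤ))) * Ts)) *
        G (Vt (k - 1 - (n : ℤ)))) :
    (∀ k : ℤ, Summable (fun n : ℕ =>
      |(∏ j ∈ Finset.range n, Real.exp (A (Vt (k - 1 - (j : ℤ))) * Ts)) *
        G (Vt (k - 1 - (n : ℤ)))|)) ∧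
    (∃ C : ℝ, ∀ k : ℤ, |Pbar k| ≤ C) ∧
    (∀ k : ℤ, Pbar (k + 1) = Real.exp (A (Vt k) * Ts) * Pbar k + G (Vt k)) ∧
    (∀ Q : ℤ → ℝ,
      (∀ k : ℤ, Q (k + 1) = Real.exp (A (Vt k) * Ts) * Q k + G (Vt k)) →
      (∃ C : ℝ, ∀ k : ℤ, |Q k| ≤ C) → Q = Pbar) ∧
    (∀ (p : ℝ) (Q : ℤ → ℤ → ℝ),
      (∀ k₀ : ℤ, Q k₀ k₀ = p) →
      (∀ k₀ k : ℤ, k₀ ≤ k →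
        Q k₀ (k + 1) = Real.exp (A (Vt k) * Ts) * Q k₀ k + G (Vt k)) →
      ∀ k : ℤ, Filter.Tendsto (fun k₀ => Q k₀ k) Filter.atBot (nhds (Pbar k))) :=
  dms_discrete_unique_bounded_entire_solution_general A G hGc a b ν Ts hν hTs hAν Vt hVt Pbar hPbar
end

section
/- Let A, G : ℝ → ℝ be continuously differentiable, let 𝒟 = [a,b] be compact with A(v) ≤ −ν < 0 and G(v) ≥ 0 on 𝒟, fix T_s > 0, and set M = max_{v∈𝒟} |d/dv e^{A(v)T_s}|, M' = max_{v∈𝒟} |G'(v)|, G_max = max_{v∈𝒟} G(v). Let w̃ : ℤ_- → (0,1] be a weighting sequence satisfying c₁ = Σ_{k=−∞}^{−1} |k| e^{−(|k|−1)ν T_s} / min{w̃_l : k ≤ l ≤ 0} < ∞ and c₂ = Σ_{k=−∞}^{0} e^{−|k|ν T_s} / w̃_{k−1} < ∞. Define F on 𝒟-valued sequences Ṽ : ℤ_- → 𝒟 by F(Ṽ) = Σ_{k=−∞}^{0} ( Π_{l=k}^{−1} e^{A(Ṽ_l) T_s} ) · G(Ṽ_{k−1}) (empty product equal to 1). Then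 F is well defined and satisfies |F(Ṽ) − F(Ṽ')| ≤ (M·G_max·c₁ + M'·c₂) · ‖Ṽ − Ṽ'‖_{w̃}; in particular F is continuous with respect to the metric d(Ṽ,Ṽ') = ‖Ṽ − Ṽ'‖_{w̃}, i.e., F is a discrete-time fading memory functional. -/
/-!
With `φ v = exp (A v T_s)` and `r = e^{-ν T_s} < 1`, every factor `φ (Ṽ_l)` lies in `[0, r]`, so the
`n`-th summand of `F` is at most `r^n G_max`. The summands of `F Ṽ` and `F Ṽ'` differ by
`(∏ φ - ∏ φ') G + ∏ φ' (G - G')`. Two products of `n` factors in `[0, r]` whose factors differ by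
at most `D` differ by at most `n D r^{n-1}`, and by the mean value theorem the factors at time `k`
differ by at most `M |Ṽ_k - Ṽ'_k| ≤ M ‖Ṽ - Ṽ'‖_w / w_k`. Summing these bounds over `n` produces
exactly the series defining `c₁` and `c₂`.
-/

open Set

theorem Finset.prod_mem_Icc_pow_card {ι R : Type*} [CommSemiring R] [PartialOrder R]
    [IsOrderedRing R] {s : Finset ι} {f : ι → R} {r : R} (h : ∀ i ∈ s, f i ∈ Set.Icc 0 r) :
    ∏ i ∈ s, f i ∈ Set.Icc 0 (r ^ s.card) :=
  ⟨Finset.prod_nonneg fun i hi => (h i hi).1,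
    (Finset.prod_le_prod (fun i hi => (h i hi).1) fun i hi => (h i hi).2).trans_eq
      (by rw [Finset.prod_const])⟩

theorem Finset.abs_prod_sub_prod_le {ι R : Type*} [CommRing R] [LinearOrder R]
    [IsStrictOrderedRing R] {s : Finset ι} {p q : ι → R} {r D : R}
    (hp : ∀ i ∈ s, p i ∈ Set.Icc 0 r) (hq : ∀ i ∈ s, q i ∈ Set.Icc 0 r)
    (hpq : ∀ i ∈ s, |p i - q i| ≤ D) :
    |∏ i ∈ s, p i - ∏ i ∈ s, q i| ≤ s.card * D * r ^ (s.card - 1) := by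
  classical
  induction s using Finset.induction_on with
  | empty => simp
  | insert a s ha ih =>
    simp only [forall_mem_insert] at hp hq hpq
    have hr : 0 ≤ r := hp.1.1.trans hp.1.2
    have hD : 0 ≤ D := (abs_nonneg _).trans hpq.1
    have hP := prod_mem_Icc_pow_card hp.2
    have hpow : (s.card : R) * r ^ (s.card - 1) * r = s.card * r ^ s.card := by
      rcases Nat.eq_zero_or_pos s.card with h | h
      · simp [h]
      · rw [mul_assoc, ← pow_succ, Nat.sub_add_cancel h]
    rw [prod_insert ha, prod_insert ha, card_insert_of_notMem ha, Nat.add_sub_cancel]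
    calc |p a * ∏ i ∈ s, p i - q a * ∏ i ∈ s, q i|
        = |(p a - q a) * ∏ i ∈ s, p i + q a * (∏ i ∈ s, p i - ∏ i ∈ s, q i)| := by
          congr 1; ring
      _ ≤ |p a - q a| * ∏ i ∈ s, p i + q a * |∏ i ∈ s, p i - ∏ i ∈ s, q i| := by
        refine (abs_add_le _ _).trans_eq ?_
        rw [abs_mul, abs_mul, abs_of_nonneg hP.1, abs_of_nonneg hq.1.1]
      _ ≤ D * r ^ s.card + r * (s.card * D * r ^ (s.card - 1)) :=
        add_le_add (mul_le_mul hpq.1 hP.2 hP.1 hD)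
          (mul_le_mul hq.1.2 (ih hp.2 hq.2 hpq.2) (abs_nonneg _) hr)
      _ = (↑(s.card + 1) : R) * D * r ^ s.card := by push_cast; linear_combination D * hpow

theorem Set.Finite.csInf_image_pos {α : Type*} {t : Set α} {f : α → ℝ} (ht : t.Finite)
    (hne : t.Nonempty) (hf : ∀ x ∈ t, 0 < f x) : 0 < sInf (f '' t) :=
  ((ht.image f).lt_csInf_iff (hne.image f)).2 (forall_mem_image.2 hf)

theorem abs_sub_le_of_forall_abs_deriv_le {f : ℝ → ℝ} {s : Set ℝ} {C : ℝ}
    (hf : Differentiable ℝ f) (hs : Convex ℝ s) (hC : ∀ x ∈ s, |deriv f x| ≤ C)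
    {u v : ℝ} (hu : u ∈ s) (hv : v ∈ s) : |f u - f v| ≤ C * |u - v| := by
  simpa only [Real.norm_eq_abs] using
    hs.norm_image_sub_le_of_norm_deriv_le (fun x _ => hf x) hC hv hu

noncomputable def weightedSupDist (w V V' : ℤ → ℝ) : ℝ :=
  ⨆ k : {k : ℤ // k ≤ 0}, w k.1 * |V k.1 - V' k.1|

section WeightedSupDist

variable {w V V' : ℤ → ℝ} {a b : ℝ}

theorem mul_abs_sub_le_weightedSupDist (hw : ∀ k : ℤ, k ≤ 0 → w k ≤ 1)
    (hV : ∀ k : ℤ, k ≤ 0 → V k ∈ Icc a b) (hV' : ∀ k : ℤ, k ≤ 0 → V' k ∈ Icc a b)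
    {k : ℤ} (hk : k ≤ 0) : w k * |V k - V' k| ≤ weightedSupDist w V V' := by
  refine le_ciSup (f := fun k : {k : ℤ // k ≤ 0} => w k.1 * |V k.1 - V' k.1|)
    ⟨b - a, forall_mem_range.2 fun ⟨j, hj⟩ => ?_⟩ ⟨k, hk⟩
  calc w j * |V j - V' j| ≤ 1 * (b - a) :=
        mul_le_mul (hw j hj) (Real.dist_le_of_mem_Icc (hV j hj) (hV' j hj)) (abs_nonneg _)
          zero_le_one
    _ = b - a := one_mul _

theorem abs_sub_le_weightedSupDist_div (hw : ∀ k : ℤ, k ≤ 0 → 0 < w k ∧ w k ≤ 1)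
    (hV : ∀ k : ℤ, k ≤ 0 → V k ∈ Icc a b) (hV' : ∀ k : ℤ, k ≤ 0 → V' k ∈ Icc a b)
    {k : ℤ} (hk : k ≤ 0) : |V k - V' k| ≤ weightedSupDist w V V' / w k := by
  rw [le_div_iff₀' (hw k hk).1]
  exact mul_abs_sub_le_weightedSupDist (fun k hk => (hw k hk).2) hV hV' hk

theorem weightedSupDist_nonneg (hw : ∀ k : ℤ, k ≤ 0 → 0 < w k ∧ w k ≤ 1)
    (hV : ∀ k : ℤ, k ≤ 0 → V k ∈ Icc a b) (hV' : ∀ k : ℤ, k ≤ 0 → V' k ∈ Icc a b) :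
    0 ≤ weightedSupDist w V V' :=
  (mul_nonneg (hw 0 le_rfl).1.le (abs_nonneg _)).trans
    (mul_abs_sub_le_weightedSupDist (fun k hk => (hw k hk).2) hV hV' le_rfl)

theorem exists_delta_of_abs_sub_le_mul_weightedSupDist {F : (ℤ → ℝ) → ℝ} {L : ℝ}
    (hw : ∀ k : ℤ, k ≤ 0 → 0 < w k ∧ w k ≤ 1)
    (hF : ∀ V V' : ℤ → ℝ, (∀ k : ℤ, k ≤ 0 → V k ∈ Icc a b) →
      (∀ k : ℤ, k ≤ 0 → V' k ∈ Icc a b) → |F V - F V'| ≤ L * weightedSupDist w V V')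
    {ε : ℝ} (hε : 0 < ε) :
    ∃ δ > 0, ∀ V V' : ℤ → ℝ, (∀ k : ℤ, k ≤ 0 → V k ∈ Icc a b) →
      (∀ k : ℤ, k ≤ 0 → V' k ∈ Icc a b) → weightedSupDist w V V' < δ → |F V - F V'| < ε := by
  refine ⟨ε / (|L| + 1), by positivity, fun V V' hV hV' hδ => ?_⟩
  calc |F V - F V'| ≤ L * weightedSupDist w V V' := hF V V' hV hV'
    _ ≤ |L| * (ε / (|L| + 1)) :=
      mul_le_mul (le_abs_self L) hδ.le (weightedSupDist_nonneg hw hV hV') (abs_nonneg L)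
    _ < (|L| + 1) * (ε / (|L| + 1)) := by gcongr; exact lt_add_one _
    _ = ε := mul_div_cancel₀ ε (by positivity)

end WeightedSupDist

/-- The summand of index `k = -n` in the paper's series for `F`. -/
def memoryTerm (φ g : ℝ → ℝ) (V : ℤ → ℝ) (n : ℕ) : ℝ :=
  (∏ j ∈ Finset.range n, φ (V (-1 - j))) * g (V (-1 - n))

section MemoryTerm

variable {φ g : ℝ → ℝ} {s : Set ℝ} {r gmax L L' S : ℝ} {w V V' : ℤ → ℝ}

theorem prod_range_mem_Icc_pow (hφ : MapsTo φ s (Icc 0 r)) (hV : ∀ k : ℤ, k ≤ 0 → V k ∈ s)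
    (n : ℕ) : ∏ j ∈ Finset.range n, φ (V (-1 - j)) ∈ Icc 0 (r ^ n) := by
  simpa using Finset.prod_mem_Icc_pow_card (s := Finset.range n)
    fun (j : ℕ) _ => hφ (hV (-1 - j) (by omega))

theorem memoryTerm_mem_Icc (hφ : MapsTo φ s (Icc 0 r)) (hg : MapsTo g s (Icc 0 gmax))
    (hV : ∀ k : ℤ, k ≤ 0 → V k ∈ s) (n : ℕ) :
    memoryTerm φ g V n ∈ Icc 0 (r ^ n * gmax) := by
  have hP := prod_range_mem_Icc_pow hφ hV n
  have hG := hg (hV (-1 - n) (by omega))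
  exact ⟨mul_nonneg hP.1 hG.1, mul_le_mul hP.2 hG.2 hG.1 (hP.1.trans hP.2)⟩

theorem summable_memoryTerm (hφ : MapsTo φ s (Icc 0 r)) (hg : MapsTo g s (Icc 0 gmax))
    (hV : ∀ k : ℤ, k ≤ 0 → V k ∈ s) (hr : r < 1) : Summable (memoryTerm φ g V) := by
  have hr0 : 0 ≤ r := (hφ (hV 0 le_rfl)).1.trans (hφ (hV 0 le_rfl)).2
  exact Summable.of_nonneg_of_le (fun n => (memoryTerm_mem_Icc hφ hg hV n).1)
    (fun n => (memoryTerm_mem_Icc hφ hg hV n).2)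
    ((summable_geometric_of_lt_one hr0 hr).mul_right gmax)

variable (hφ : MapsTo φ s (Icc 0 r)) (hg : MapsTo g s (Icc 0 gmax))
  (hφL : ∀ u ∈ s, ∀ v ∈ s, |φ u - φ v| ≤ L * |u - v|)
  (hgL : ∀ u ∈ s, ∀ v ∈ s, |g u - g v| ≤ L' * |u - v|) (hL : 0 ≤ L) (hL' : 0 ≤ L')
  (hw : ∀ k : ℤ, k ≤ 0 → 0 < w k) (hS : ∀ k : ℤ, k ≤ 0 → |V k - V' k| ≤ S / w k) (hS0 : 0 ≤ S)
  (hV : ∀ k : ℤ, k ≤ 0 → V k ∈ s) (hV' : ∀ k : ℤ, k ≤ 0 → V' k ∈ s)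
include hφ hφL hL hw hS hS0 hV hV'

theorem abs_prod_range_sub_prod_range_le (n : ℕ) :
    |∏ j ∈ Finset.range n, φ (V (-1 - j)) - ∏ j ∈ Finset.range n, φ (V' (-1 - j))| ≤
      n * (L * S / sInf (w '' Icc (-n) 0)) * r ^ (n - 1) := by
  have hinf : 0 < sInf (w '' Icc (-(n : ℤ)) 0) :=
    (finite_Icc _ _).csInf_image_pos (nonempty_Icc.2 (by omega)) fun k hk => hw k hk.2
  have hstep : ∀ j ∈ Finset.range n,
      |φ (V (-1 - j)) - φ (V' (-1 - j))| ≤ L * S / sInf (w '' Icc (-(n : ℤ)) 0) := by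
    intro j hj
    have hk : -1 - (j : ℤ) ∈ Icc (-(n : ℤ)) 0 := by
      simp only [Finset.mem_range] at hj; constructor <;> omega
    calc |φ (V (-1 - j)) - φ (V' (-1 - j))| ≤ L * |V (-1 - j) - V' (-1 - j)| :=
          hφL _ (hV _ hk.2) _ (hV' _ hk.2)
      _ ≤ L * (S / w (-1 - j)) := mul_le_mul_of_nonneg_left (hS _ hk.2) hL
      _ ≤ L * (S / sInf (w '' Icc (-(n : ℤ)) 0)) := by
        gcongr
        exact csInf_le ((finite_Icc _ _).image w).bddBelow (mem_image_of_mem w hk)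
      _ = L * S / sInf (w '' Icc (-(n : ℤ)) 0) := (mul_div_assoc ..).symm
  simpa using Finset.abs_prod_sub_prod_le (fun (j : ℕ) _ => hφ (hV (-1 - j) (by omega)))
    (fun (j : ℕ) _ => hφ (hV' (-1 - j) (by omega))) hstep

include hg hgL hL'

theorem abs_memoryTerm_sub_le (n : ℕ) :
    |memoryTerm φ g V n - memoryTerm φ g V' n| ≤
      L * gmax * S * (n * r ^ (n - 1) / sInf (w '' Icc (-n) 0)) +
        L' * S * (r ^ n / w (-1 - n)) := by
  have hk : -1 - (n : ℤ) ≤ 0 := by omega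
  have hP := abs_prod_range_sub_prod_range_le hφ hφL hL hw hS hS0 hV hV' n
  have hP' := prod_range_mem_Icc_pow hφ hV' n
  have hG := hg (hV _ hk)
  have hGd : |g (V (-1 - n)) - g (V' (-1 - n))| ≤ L' * (S / w (-1 - n)) :=
    (hgL _ (hV _ hk) _ (hV' _ hk)).trans (mul_le_mul_of_nonneg_left (hS _ hk) hL')
  unfold memoryTerm
  set P := ∏ j ∈ Finset.range n, φ (V (-1 - j))
  set P' := ∏ j ∈ Finset.range n, φ (V' (-1 - j))
  calc |P * g (V (-1 - n)) - P' * g (V' (-1 - n))|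
      = |(P - P') * g (V (-1 - n)) + P' * (g (V (-1 - n)) - g (V' (-1 - n)))| := by
        congr 1; ring
    _ ≤ |P - P'| * g (V (-1 - n)) + P' * |g (V (-1 - n)) - g (V' (-1 - n))| := by
        refine (abs_add_le _ _).trans_eq ?_
        rw [abs_mul, abs_mul, abs_of_nonneg hG.1, abs_of_nonneg hP'.1]
    _ ≤ n * (L * S / sInf (w '' Icc (-n) 0)) * r ^ (n - 1) * gmax +
          r ^ n * (L' * (S / w (-1 - n))) :=
        add_le_add (mul_le_mul hP hG.2 hG.1 ((abs_nonneg _).trans hP))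
          (mul_le_mul hP'.2 hGd (abs_nonneg _) (hP'.1.trans hP'.2))
    _ = _ := by ring

theorem abs_tsum_memoryTerm_sub_le (hr : r < 1)
    (hc₁ : Summable fun n : ℕ => ((n : ℝ) + 1) * r ^ n / sInf (w '' Icc (-(n : ℤ) - 1) 0))
    (hc₂ : Summable fun n : ℕ => r ^ n / w (-(n : ℤ) - 1)) :
    |∑' n, memoryTerm φ g V n - ∑' n, memoryTerm φ g V' n| ≤
      (L * gmax * ∑' n : ℕ, ((n : ℝ) + 1) * r ^ n / sInf (w '' Icc (-(n : ℤ) - 1) 0) +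
        L' * ∑' n : ℕ, r ^ n / w (-(n : ℤ) - 1)) * S := by
  have hb₁ : HasSum (fun n : ℕ => n * r ^ (n - 1) / sInf (w '' Icc (-n) 0))
      (∑' n : ℕ, ((n : ℝ) + 1) * r ^ n / sInf (w '' Icc (-(n : ℤ) - 1) 0)) := by
    refine (hasSum_nat_add_iff' 1).1 ?_
    simp only [Finset.range_one, Finset.sum_singleton, Nat.add_sub_cancel, Nat.cast_add,
      Nat.cast_one, neg_add', CharP.cast_eq_zero, zero_mul, zero_div, sub_zero]
    exact hc₁.hasSum
  have hb₂ : HasSum (fun n : ℕ => r ^ n / w (-1 - n)) (∑' n : ℕ, r ^ n / w (-(n : ℤ) - 1)) := by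
    simpa only [neg_sub_comm] using hc₂.hasSum
  rw [← (summable_memoryTerm hφ hg hV hr).tsum_sub (summable_memoryTerm hφ hg hV' hr),
    ← Real.norm_eq_abs]
  exact (tsum_of_norm_bounded ((hb₁.mul_left (L * gmax * S)).add (hb₂.mul_left (L' * S)))
    (abs_memoryTerm_sub_le hφ hg hφL hgL hL hL' hw hS hS0 hV hV')).trans_eq (by ring)

end MemoryTerm

theorem dms_discrete_fading_memory_functional_general
    (A G : ℝ → ℝ) (hA : ContDiff ℝ 1 A) (hG : ContDiff ℝ 1 G)
    (a b ν Ts : ℝ) (hν : 0 < ν) (hTs : 0 < Ts)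
    (hAν : ∀ v ∈ Set.Icc a b, A v ≤ -ν)
    (hGpos : ∀ v ∈ Set.Icc a b, 0 ≤ G v)
    (M M' Gmax : ℝ)
    (hM : IsGreatest
      ((fun v => |deriv (fun u => Real.exp (A u * Ts)) v|) '' Set.Icc a b) M)
    (hM' : IsGreatest ((fun v => |deriv G v|) '' Set.Icc a b) M')
    (hGmax : IsGreatest (G '' Set.Icc a b) Gmax)
    (w : ℤ → ℝ) (hw : ∀ k : ℤ, k ≤ 0 → 0 < w k ∧ w k ≤ 1)
    (c₁ c₂ : ℝ)
    (hc₁s : Summable (fun n : ℕ => ((n : ℝ) + 1) * Real.exp (-(n : ℝ) * ν * Ts) /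
      sInf (w '' Set.Icc (-(n : ℤ) - 1) 0)))
    (hc₁ : c₁ = ∑' n : ℕ, ((n : ℝ) + 1) * Real.exp (-(n : ℝ) * ν * Ts) /
      sInf (w '' Set.Icc (-(n : ℤ) - 1) 0))
    (hc₂s : Summable (fun n : ℕ => Real.exp (-(n : ℝ) * ν * Ts) / w (-(n : ℤ) - 1)))
    (hc₂ : c₂ = ∑' n : ℕ, Real.exp (-(n : ℝ) * ν * Ts) / w (-(n : ℤ) - 1))
    (F : (ℤ → ℝ) → ℝ)
    (hF : ∀ Vt : ℤ → ℝ, F Vt = ∑' n : ℕ,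
      (∏ j ∈ Finset.range n, Real.exp (A (Vt (-1 - (j : ℤ))) * Ts)) *
        G (Vt (-1 - (n : ℤ)))) :
    (∀ Vt : ℤ → ℝ, (∀ k : ℤ, k ≤ 0 → Vt k ∈ Set.Icc a b) →
      Summable (fun n : ℕ =>
        (∏ j ∈ Finset.range n, Real.exp (A (Vt (-1 - (j : ℤ))) * Ts)) *
          G (Vt (-1 - (n : ℤ))))) ∧
    (∀ Vt Vt' : ℤ → ℝ,
      (∀ k : ℤ, k ≤ 0 → Vt k ∈ Set.Icc a b) →
      (∀ k : ℤ, k ≤ 0 → Vt' k ∈ Set.Icc a b) →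
      |F Vt - F Vt'| ≤ (M * Gmax * c₁ + M' * c₂) *
        ⨆ k : {k : ℤ // k ≤ 0}, w k.1 * |Vt k.1 - Vt' k.1|) ∧
    (∀ ε > (0 : ℝ), ∃ δ > (0 : ℝ), ∀ Vt Vt' : ℤ → ℝ,
      (∀ k : ℤ, k ≤ 0 → Vt k ∈ Set.Icc a b) →
      (∀ k : ℤ, k ≤ 0 → Vt' k ∈ Set.Icc a b) →
      (⨆ k : {k : ℤ // k ≤ 0}, w k.1 * |Vt k.1 - Vt' k.1|) < δ →
      |F Vt - F Vt'| < ε) := by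
  set r := Real.exp (-(ν * Ts))
  have hr : r < 1 := Real.exp_lt_one_iff.2 (neg_neg_of_pos (mul_pos hν hTs))
  have hpow (n : ℕ) : Real.exp (-(n : ℝ) * ν * Ts) = r ^ n := by
    rw [← Real.exp_nat_mul]; ring_nf
  simp only [hpow] at hc₁s hc₁ hc₂s hc₂
  have hφ : MapsTo (fun u => Real.exp (A u * Ts)) (Icc a b) (Icc 0 r) := fun v hv =>
    ⟨(Real.exp_pos _).le, Real.exp_le_exp.2 (by nlinarith [hAν v hv])⟩
  have hg : MapsTo G (Icc a b) (Icc 0 Gmax) := fun v hv =>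
    ⟨hGpos v hv, hGmax.2 (mem_image_of_mem G hv)⟩
  have hφL (u) (hu : u ∈ Icc a b) (v) (hv : v ∈ Icc a b) :=
    abs_sub_le_of_forall_abs_deriv_le ((hA.differentiable one_ne_zero).mul_const Ts).exp
      (convex_Icc a b) (fun x hx => hM.2 (mem_image_of_mem _ hx)) hu hv
  have hGL (u) (hu : u ∈ Icc a b) (v) (hv : v ∈ Icc a b) :=
    abs_sub_le_of_forall_abs_deriv_le (hG.differentiable one_ne_zero)
      (convex_Icc a b) (fun x hx => hM'.2 (mem_image_of_mem _ hx)) hu hv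
  have hM0 : 0 ≤ M := by obtain ⟨x, -, rfl⟩ := hM.1; positivity
  have hM'0 : 0 ≤ M' := by obtain ⟨x, -, rfl⟩ := hM'.1; positivity
  have hlip (V V' : ℤ → ℝ) (hV : ∀ k : ℤ, k ≤ 0 → V k ∈ Icc a b)
      (hV' : ∀ k : ℤ, k ≤ 0 → V' k ∈ Icc a b) :
      |F V - F V'| ≤ (M * Gmax * c₁ + M' * c₂) * weightedSupDist w V V' := by
    rw [hF, hF, hc₁, hc₂]
    exact abs_tsum_memoryTerm_sub_le hφ hg hφL hGL hM0 hM'0 (fun k hk => (hw k hk).1)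
      (fun k hk => abs_sub_le_weightedSupDist_div hw hV hV' hk)
      (weightedSupDist_nonneg hw hV hV') hV hV' hr hc₁s hc₂s
  exact ⟨fun V hV => (summable_memoryTerm hφ hg hV hr).congr fun _ => rfl, hlip,
    fun ε => exists_delta_of_abs_sub_le_mul_weightedSupDist hw hlip⟩

/-- discrete-time fading memory, Theorem 2: the functional
`F(Ṽ) = Σ_{k=−∞}^0 (Π_{l=k}^{−1} e^{A(Ṽ_l)T_s})·G(Ṽ_{k−1})` (written below with
`k = −n`, `n ∈ ℕ`) induced by the discrete-time DMS dynamics is well defined on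
`𝒟`-valued sequences on `ℤ_-` and satisfies
`|F(Ṽ) − F(Ṽ')| ≤ (M·G_max·c₁ + M'·c₂)·‖Ṽ − Ṽ'‖_{w̃}` where
`‖Ṽ‖_{w̃} = sup_{k ≤ 0} w̃_k|Ṽ_k|`; in particular it is continuous with respect
to this weighted norm, i.e., it is a discrete-time fading memory functional. -/
theorem dms_discrete_fading_memory_functional
    (A G : ℝ → ℝ) (hA : ContDiff ℝ 1 A) (hG : ContDiff ℝ 1 G)
    (a b ν Ts : ℝ) (hab : a ≤ b) (hν : 0 < ν) (hTs : 0 < Ts)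
    (hAν : ∀ v ∈ Set.Icc a b, A v ≤ -ν)
    (hGpos : ∀ v ∈ Set.Icc a b, 0 ≤ G v)
    (M M' Gmax : ℝ)
    (hM : IsGreatest
      ((fun v => |deriv (fun u => Real.exp (A u * Ts)) v|) '' Set.Icc a b) M)
    (hM' : IsGreatest ((fun v => |deriv G v|) '' Set.Icc a b) M')
    (hGmax : IsGreatest (G '' Set.Icc a b) Gmax)
    (w : ℤ → ℝ) (hw : ∀ k : ℤ, k ≤ 0 → 0 < w k ∧ w k ≤ 1)
    (hw0 : Filter.Tendsto w Filter.atBot (nhds 0))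
    (c₁ c₂ : ℝ)
    (hc₁s : Summable (fun n : ℕ => ((n : ℝ) + 1) * Real.exp (-(n : ℝ) * ν * Ts) /
      sInf (w '' Set.Icc (-(n : ℤ) - 1) 0)))
    (hc₁ : c₁ = ∑' n : ℕ, ((n : ℝ) + 1) * Real.exp (-(n : ℝ) * ν * Ts) /
      sInf (w '' Set.Icc (-(n : ℤ) - 1) 0))
    (hc₂s : Summable (fun n : ℕ => Real.exp (-(n : ℝ) * ν * Ts) / w (-(n : ℤ) - 1)))
    (hc₂ : c₂ = ∑' n : ℕ, Real.exp (-(n : ℝ) * ν * Ts) / w (-(n : ℤ) - 1))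
    (F : (ℤ → ℝ) → ℝ)
    (hF : ∀ Vt : ℤ → ℝ, F Vt = ∑' n : ℕ,
      (∏ j ∈ Finset.range n, Real.exp (A (Vt (-1 - (j : ℤ))) * Ts)) *
        G (Vt (-1 - (n : ℤ)))) :
    (∀ Vt : ℤ → ℝ, (∀ k : ℤ, k ≤ 0 → Vt k ∈ Set.Icc a b) →
      Summable (fun n : ℕ =>
        (∏ j ∈ Finset.range n, Real.exp (A (Vt (-1 - (j : ℤ))) * Ts)) *
          G (Vt (-1 - (n : ℤ))))) ∧
    (∀ Vt Vt' : ℤ → ℝ,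
      (∀ k : ℤ, k ≤ 0 → Vt k ∈ Set.Icc a b) →
      (∀ k : ℤ, k ≤ 0 → Vt' k ∈ Set.Icc a b) →
      |F Vt - F Vt'| ≤ (M * Gmax * c₁ + M' * c₂) *
        ⨆ k : {k : ℤ // k ≤ 0}, w k.1 * |Vt k.1 - Vt' k.1|) ∧
    (∀ ε > (0 : ℝ), ∃ δ > (0 : ℝ), ∀ Vt Vt' : ℤ → ℝ,
      (∀ k : ℤ, k ≤ 0 → Vt k ∈ Set.Icc a b) →
      (∀ k : ℤ, k ≤ 0 → Vt' k ∈ Set.Icc a b) →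
      (⨆ k : {k : ℤ // k ≤ 0}, w k.1 * |Vt k.1 - Vt' k.1|) < δ →
      |F Vt - F Vt'| < ε) :=
  dms_discrete_fading_memory_functional_general A G hA hG a b ν Ts hν hTs hAν hGpos M M' Gmax hM hM'
    hGmax w hw c₁ c₂ hc₁s hc₁ hc₂s hc₂ F hF
end
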